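/- arXiv:2506.14689 — 10 statements merged into one kernel-verified Lean document; each statement's English description precedes it below -/
import Mathlib

section
/- Let k be a field, C a coalgebra over k, and V₁, V₂ ⊆ C k-subspaces. Then the set of group-like elements contained in the wedge product V₁ ∨ V₂ equals the union of the group-like elements contained in V₁ and those contained in V₂; that is, (V₁ ∨ V₂) ∩ pts(C) = (V₁ ∩ pts(C)) ∪ (V₂ ∩ pts(C)). -/
open TensorProduct

/-- The image of `V ⊗ W` in `C ⊗ C`, for subspaces `V, W` of `C`. -/
noncomputable def tensorImage {k C : Type*} [Field k] [AddCommGroup C] [Module k C]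
    (V W : Submodule k C) : Submodule k (C ⊗[k] C) :=
  LinearMap.range (TensorProduct.map V.subtype W.subtype)

/-- The wedge product `V ∨ W = Δ⁻¹(V ⊗ C + C ⊗ W)` of two subspaces of a coalgebra `C`. -/
noncomputable def wedge {k C : Type*} [Field k] [AddCommGroup C] [Module k C] [Coalgebra k C]
    (V W : Submodule k C) : Submodule k C :=
  (tensorImage V ⊤ ⊔ tensorImage ⊤ W).comap (Coalgebra.comul (R := k) (A := C))

/-- An element of a coalgebra is group-like if it is nonzero and `Δ x = x ⊗ x`. -/
def IsGroupLike (k : Type*) {C : Type*} [Field k] [AddCommGroup C] [Module k C]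
    [Coalgebra k C] (x : C) : Prop :=
  x ≠ 0 ∧ Coalgebra.comul (R := k) x = x ⊗ₜ[k] x

lemma aux_mem {k C : Type*} [Field k] [AddCommGroup C] [Module k C]
    (V W : Submodule k C) (x : C)
    (hx : x ⊗ₜ[k] x ∈ tensorImage V ⊤ ⊔ tensorImage ⊤ W) (hxV : x ∉ V) : x ∈ W := by
  -- find functional f vanishing on V with f x ≠ 0
  have hq : V.mkQ x ≠ 0 := by
    simpa [Submodule.Quotient.mk_eq_zero] using hxV
  obtain ⟨g, hg⟩ : ∃ g : Module.Dual k (C ⧸ V), g (V.mkQ x) ≠ 0 := by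
    by_contra h
    push_neg at h
    exact hq ((Module.forall_dual_apply_eq_zero_iff k _).mp h)
  set f : C →ₗ[k] k := g ∘ₗ V.mkQ with hf
  have hfV : ∀ v ∈ V, f v = 0 := by
    intro v hv
    simp [hf, (Submodule.Quotient.mk_eq_zero V).mpr hv]
  have hfx : f x ≠ 0 := hg
  -- define F : C ⊗ C → C
  set F : C ⊗[k] C →ₗ[k] C :=
    (TensorProduct.lid k C).toLinearMap ∘ₗ LinearMap.rTensor C f with hF
  have hFtmul : ∀ a b : C, F (a ⊗ₜ[k] b) = f a • b := by
    intro a b; simp [hF]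
  -- F vanishes on tensorImage V ⊤
  have h1 : ∀ y ∈ tensorImage V ⊤, F y = 0 := by
    rintro y ⟨t, rfl⟩
    induction t with
    | zero => simp
    | tmul v c =>
        simp only [TensorProduct.map_tmul]
        rw [hFtmul, hfV (V.subtype v) v.2, zero_smul]
    | add a b ha hb => rw [map_add, map_add, ha, hb, add_zero]
  -- F maps tensorImage ⊤ W into W
  have h2 : ∀ y ∈ tensorImage ⊤ W, F y ∈ W := by
    rintro y ⟨t, rfl⟩
    induction t with
    | zero => simp
    | tmul c w =>
        simp only [TensorProduct.map_tmul]
        rw [hFtmul]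
        exact W.smul_mem _ w.2
    | add a b ha hb => rw [map_add, map_add]; exact W.add_mem ha hb
  rw [Submodule.mem_sup] at hx
  obtain ⟨y, hy, z, hz, hyz⟩ := hx
  have hFx : F (x ⊗ₜ[k] x) ∈ W := by
    rw [← hyz, map_add, h1 y hy, zero_add]
    exact h2 z hz
  rw [hFtmul] at hFx
  have := W.smul_mem (f x)⁻¹ hFx
  rwa [inv_smul_smul₀ hfx] at this

/-- The group-like elements contained in a wedge product `V₁ ∨ V₂` are exactly the union of
the group-like elements contained in `V₁` and those contained in `V₂`. -/
theorem wedge_inter_groupLike {k C : Type*} [Field k] [AddCommGroup C] [Module k C]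
    [Coalgebra k C] (V₁ V₂ : Submodule k C) :
    {x : C | x ∈ wedge V₁ V₂ ∧ IsGroupLike k x} =
      {x : C | x ∈ V₁ ∧ IsGroupLike k x} ∪ {x : C | x ∈ V₂ ∧ IsGroupLike k x} := by
  ext x
  simp only [Set.mem_setOf_eq, Set.mem_union]
  constructor
  · rintro ⟨hw, hne, hΔ⟩
    have hx : x ⊗ₜ[k] x ∈ tensorImage V₁ ⊤ ⊔ tensorImage ⊤ V₂ := by
      rw [← hΔ]; exact hw
    by_cases h1 : x ∈ V₁
    · exact Or.inl ⟨h1, hne, hΔ⟩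
    · exact Or.inr ⟨aux_mem V₁ V₂ x hx h1, hne, hΔ⟩
  · rintro (⟨hv, hne, hΔ⟩ | ⟨hv, hne, hΔ⟩)
    · refine ⟨?_, hne, hΔ⟩
      simp only [wedge, Submodule.mem_comap, hΔ]
      exact Submodule.mem_sup_left ⟨(⟨x, hv⟩ : V₁) ⊗ₜ[k] (⟨x, trivial⟩ : (⊤ : Submodule k C)), rfl⟩
    · refine ⟨?_, hne, hΔ⟩
      simp only [wedge, Submodule.mem_comap, hΔ]
      exact Submodule.mem_sup_right ⟨(⟨x, trivial⟩ : (⊤ : Submodule k C)) ⊗ₜ[k] (⟨x, hv⟩ : V₂), rfl⟩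
end

section
/- Let k be a field, C a coalgebra over k, (Vᵢ)_{i∈ι} a family of k-subspaces of C, and W ⊆ C a k-subspace. Then (⋂ᵢ Vᵢ) ∨ W = ⋂ᵢ (Vᵢ ∨ W) and W ∨ (⋂ᵢ Vᵢ) = ⋂ᵢ (W ∨ Vᵢ). -/
open TensorProduct

/-!
By right exactness of `⊗`, `V ∨ W` is the preimage under `Δ` of the kernel of
`π_V ⊗ π_W : C ⊗ C → C/V ⊗ C/W`. Factoring `π_V ⊗ π_W = (π_V ⊗ 1) ∘ (1 ⊗ π_W)` reduces the
theorem to `ker (π_{⋂ Vᵢ} ⊗ 1) = ⋂ ker (π_{Vᵢ} ⊗ 1)` on `C ⊗ N`. This holds because `N` is free: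
writing `t = ∑ⱼ mⱼ ⊗ bⱼ` in a basis `b` of `N`, `t` lies in `ker (π_V ⊗ 1)` iff every `mⱼ ∈ V`.
-/

open LinearMap

section FreeModule

variable {R M M' N ι : Type*} [CommRing R] [AddCommGroup M] [Module R M]
  [AddCommGroup M'] [Module R M'] [AddCommGroup N] [Module R N]

theorem TensorProduct.equivFinsuppOfBasisRight_rTensor [DecidableEq ι] (b : Module.Basis ι R N)
    (f : M →ₗ[R] M') (x : M ⊗[R] N) (i : ι) :
    equivFinsuppOfBasisRight b (f.rTensor N x) i = f (equivFinsuppOfBasisRight b x i) := by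
  induction x with
  | zero => simp
  | tmul m n => simp
  | add x y hx hy => simp [hx, hy]

theorem TensorProduct.equivFinsuppOfBasisLeft_lTensor [DecidableEq ι] (b : Module.Basis ι R N)
    (f : M →ₗ[R] M') (x : N ⊗[R] M) (i : ι) :
    equivFinsuppOfBasisLeft b (f.lTensor N x) i = f (equivFinsuppOfBasisLeft b x i) := by
  induction x with
  | zero => simp
  | tmul m n => simp
  | add x y hx hy => simp [hx, hy]

theorem LinearMap.mem_ker_rTensor_mkQ_iff [DecidableEq ι] (b : Module.Basis ι R N)
    (V : Submodule R M) (x : M ⊗[R] N) :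
    x ∈ ker (V.mkQ.rTensor N) ↔ ∀ i, equivFinsuppOfBasisRight b x i ∈ V := by
  simp only [mem_ker, ← (equivFinsuppOfBasisRight b).map_eq_zero_iff, Finsupp.ext_iff,
    equivFinsuppOfBasisRight_rTensor, Finsupp.coe_zero, Pi.zero_apply, Submodule.mkQ_apply,
    Submodule.Quotient.mk_eq_zero]

theorem LinearMap.mem_ker_lTensor_mkQ_iff [DecidableEq ι] (b : Module.Basis ι R N)
    (V : Submodule R M) (x : N ⊗[R] M) :
    x ∈ ker (V.mkQ.lTensor N) ↔ ∀ i, equivFinsuppOfBasisLeft b x i ∈ V := by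
  simp only [mem_ker, ← (equivFinsuppOfBasisLeft b).map_eq_zero_iff, Finsupp.ext_iff,
    equivFinsuppOfBasisLeft_lTensor, Finsupp.coe_zero, Pi.zero_apply, Submodule.mkQ_apply,
    Submodule.Quotient.mk_eq_zero]

variable [Module.Free R N] {κ : Sort*}

theorem LinearMap.ker_rTensor_mkQ_iInf (Vs : κ → Submodule R M) :
    ker ((⨅ i, Vs i).mkQ.rTensor N) = ⨅ i, ker ((Vs i).mkQ.rTensor N) := by
  classical
  ext x
  simp only [Submodule.mem_iInf, mem_ker_rTensor_mkQ_iff (Module.Free.chooseBasis R N)]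
  exact forall_comm

theorem LinearMap.ker_lTensor_mkQ_iInf (Vs : κ → Submodule R M) :
    ker ((⨅ i, Vs i).mkQ.lTensor N) = ⨅ i, ker ((Vs i).mkQ.lTensor N) := by
  classical
  ext x
  simp only [Submodule.mem_iInf, mem_ker_lTensor_mkQ_iff (Module.Free.chooseBasis R N)]
  exact forall_comm

end FreeModule

section Wedge

variable {k C : Type*} [Field k] [AddCommGroup C] [Module k C]

theorem tensorImage_top_right (V : Submodule k C) :
    tensorImage V ⊤ = range (V.subtype.rTensor C) := by
  simp only [tensorImage, rTensor, range_map, Submodule.range_subtype, range_id]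

theorem tensorImage_top_left (W : Submodule k C) :
    tensorImage ⊤ W = range (W.subtype.lTensor C) := by
  simp only [tensorImage, lTensor, range_map, Submodule.range_subtype, range_id]

theorem ker_map_mkQ_eq_tensorImage_sup (V W : Submodule k C) :
    ker (map V.mkQ W.mkQ) = tensorImage V ⊤ ⊔ tensorImage ⊤ W := by
  rw [map_ker (exact_subtype_mkQ V) V.mkQ_surjective (exact_subtype_mkQ W) W.mkQ_surjective,
    tensorImage_top_right, tensorImage_top_left, sup_comm]

variable [Coalgebra k C]

theorem wedge_eq_comap_ker_map (V W : Submodule k C) :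
    wedge V W = (ker (map V.mkQ W.mkQ)).comap (Coalgebra.comul (R := k)) := by
  rw [wedge, ker_map_mkQ_eq_tensorImage_sup]

theorem wedge_eq_comap_ker_rTensor (V W : Submodule k C) :
    wedge V W = (ker (V.mkQ.rTensor _)).comap (W.mkQ.lTensor C ∘ₗ Coalgebra.comul (R := k)) := by
  rw [wedge_eq_comap_ker_map, ← rTensor_comp_lTensor, ker_comp, Submodule.comap_comp]

theorem wedge_eq_comap_ker_lTensor (V W : Submodule k C) :
    wedge V W = (ker (W.mkQ.lTensor _)).comap (V.mkQ.rTensor C ∘ₗ Coalgebra.comul (R := k)) := by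
  rw [wedge_eq_comap_ker_map, ← lTensor_comp_rTensor, ker_comp, Submodule.comap_comp]

end Wedge

/-- Wedge products distribute over arbitrary intersections of subspaces, on either side. -/
theorem wedge_iInf {k C : Type*} [Field k] [AddCommGroup C] [Module k C] [Coalgebra k C]
    {ι : Sort*} (Vs : ι → Submodule k C) (W : Submodule k C) :
    wedge (⨅ i, Vs i) W = (⨅ i, wedge (Vs i) W) ∧
      wedge W (⨅ i, Vs i) = (⨅ i, wedge W (Vs i)) := by
  constructor
  · simp only [wedge_eq_comap_ker_rTensor, ker_rTensor_mkQ_iInf, Submodule.comap_iInf]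
  · simp only [wedge_eq_comap_ker_lTensor, ker_lTensor_mkQ_iInf, Submodule.comap_iInf]
end

section
/- Let k be a field, C a coalgebra over k, V₁, V₂ ⊆ C k-subspaces, and D ⊆ C a subcoalgebra. Then (V₁ ∨_C V₂) ∩ D equals the wedge product of V₁ ∩ D and V₂ ∩ D computed in D; explicitly, (V₁ ∨_C V₂) ∩ D = { x ∈ D : Δ(x) ∈ (V₁ ∩ D) ⊗ D + D ⊗ (V₂ ∩ D) }, where the tensor products denote images in C ⊗ C. -/
open TensorProduct

/-!
Over a field the kernel of `f ⊗ g` is `ker f ⊗ M + M ⊗ ker g`, so `V₁ ⊗ C + C ⊗ V₂` is the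
kernel of `C ⊗ C → C/V₁ ⊗ C/V₂`. Since `D ⊗ D` embeds in `C ⊗ C`, its intersection with
`D ⊗ D` is the kernel of `D ⊗ D → C/V₁ ⊗ C/V₂`, which by the same formula is
`(V₁ ∩ D) ⊗ D + D ⊗ (V₂ ∩ D)`. As `Δ D ⊆ D ⊗ D`, taking preimages under `Δ` gives the theorem.
-/

namespace TensorImage

open LinearMap Submodule

variable {k C M N : Type*} [Field k] [AddCommGroup C] [Module k C]
  [AddCommGroup M] [Module k M] [AddCommGroup N] [Module k N]

theorem range_map_eq (f : M →ₗ[k] C) (g : N →ₗ[k] C) :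
    range (TensorProduct.map f g) = tensorImage (range f) (range g) := by
  rw [tensorImage, range_map, range_map, range_subtype, range_subtype]

theorem map_map (f g : M →ₗ[k] C) (V W : Submodule k M) :
    (tensorImage V W).map (TensorProduct.map f g) = tensorImage (V.map f) (W.map g) := by
  rw [tensorImage, ← range_comp, ← TensorProduct.map_comp, range_map_eq, range_comp,
    range_comp, range_subtype, range_subtype]

theorem ker_map_eq_sup (f : C →ₗ[k] M) (g : C →ₗ[k] N) :
    ker (TensorProduct.map f g) = tensorImage (ker f) ⊤ ⊔ tensorImage ⊤ (ker g) := by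
  have hf : Function.Exact (ker f).subtype f.rangeRestrict :=
    LinearMap.exact_iff.2 (by rw [ker_rangeRestrict, range_subtype])
  have hg : Function.Exact (ker g).subtype g.rangeRestrict :=
    LinearMap.exact_iff.2 (by rw [ker_rangeRestrict, range_subtype])
  have hincl : Function.Injective (TensorProduct.map (range f).subtype (range g).subtype) :=
    map_injective_of_flat_flat _ _ (range f).injective_subtype (range g).injective_subtype
  have hfactor : TensorProduct.map f g = TensorProduct.map (range f).subtype (range g).subtype ∘ₗ
      TensorProduct.map f.rangeRestrict g.rangeRestrict := by
    rw [← TensorProduct.map_comp]; rfl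
  rw [hfactor, ker_comp, ker_eq_bot.2 hincl, comap_bot,
    TensorProduct.map_ker hf f.surjective_rangeRestrict hg g.surjective_rangeRestrict,
    lTensor, rTensor, range_map_eq, range_map_eq, range_id, range_subtype, range_subtype,
    sup_comm]

theorem sup_inf_tensorImage_self (V₁ V₂ D : Submodule k C) :
    (tensorImage V₁ ⊤ ⊔ tensorImage ⊤ V₂) ⊓ tensorImage D D =
      tensorImage (V₁ ⊓ D) D ⊔ tensorImage D (V₂ ⊓ D) := by
  calc (tensorImage V₁ ⊤ ⊔ tensorImage ⊤ V₂) ⊓ tensorImage D D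
      = range (TensorProduct.map D.subtype D.subtype) ⊓ ker (TensorProduct.map V₁.mkQ V₂.mkQ) := by
        rw [ker_map_eq_sup, ker_mkQ, ker_mkQ, inf_comm]; rfl
    _ = (ker (TensorProduct.map (V₁.mkQ ∘ₗ D.subtype) (V₂.mkQ ∘ₗ D.subtype))).map
          (TensorProduct.map D.subtype D.subtype) := by
        rw [← map_comap_eq, ← ker_comp, ← TensorProduct.map_comp]
    _ = tensorImage (V₁ ⊓ D) D ⊔ tensorImage D (V₂ ⊓ D) := by
        rw [ker_map_eq_sup, Submodule.map_sup, map_map, map_map, ker_comp, ker_comp, ker_mkQ,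
          ker_mkQ, map_comap_subtype, map_comap_subtype, map_subtype_top, inf_comm D, inf_comm D]

end TensorImage

/-- If `D` is a subcoalgebra of `C`, then `(V₁ ∨_C V₂) ∩ D` equals the wedge product of
`V₁ ∩ D` and `V₂ ∩ D` computed inside `D`, namely
`{x ∈ D | Δ x ∈ (V₁ ∩ D) ⊗ D + D ⊗ (V₂ ∩ D)}`. -/
theorem wedge_inf_subcoalgebra {k C : Type*} [Field k] [AddCommGroup C] [Module k C]
    [Coalgebra k C] (V₁ V₂ D : Submodule k C)
    (hD : D ≤ (tensorImage D D).comap (Coalgebra.comul (R := k) (A := C))) :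
    wedge V₁ V₂ ⊓ D =
      D ⊓ (tensorImage (V₁ ⊓ D) D ⊔ tensorImage D (V₂ ⊓ D)).comap
        (Coalgebra.comul (R := k) (A := C)) := by
  calc wedge V₁ V₂ ⊓ D
      = wedge V₁ V₂ ⊓ ((tensorImage D D).comap (Coalgebra.comul (R := k) (A := C)) ⊓ D) := by
        rw [inf_eq_right.2 hD]
    _ = ((tensorImage V₁ ⊤ ⊔ tensorImage ⊤ V₂) ⊓ tensorImage D D).comap
          (Coalgebra.comul (R := k) (A := C)) ⊓ D := by
        rw [← inf_assoc, wedge, Submodule.comap_inf]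
    _ = D ⊓ (tensorImage (V₁ ⊓ D) D ⊔ tensorImage D (V₂ ⊓ D)).comap
          (Coalgebra.comul (R := k) (A := C)) := by
        rw [TensorImage.sup_inf_tensorImage_self, inf_comm]
end

section
/- Let k be a field, C a coalgebra over k, and (Dᵢ)_{i∈ι} a family of subcoalgebras of C such that C is the internal direct sum of the Dᵢ (the Dᵢ are linearly independent as subspaces and their sum is C). Let Vᵢ, V′ᵢ ⊆ Dᵢ be k-subspaces for each i. Then (⨆ᵢ Vᵢ) ∨_C (⨆ᵢ V′ᵢ) = ⨆ᵢ { x ∈ Dᵢ : Δ(x) ∈ Vᵢ ⊗ Dᵢ + Dᵢ ⊗ V′ᵢ }, i.e., the wedge product in C of the direct sums equals the direct sum over i of the wedge products Vᵢ ∨_{Dᵢ} V′ᵢ computed in each Dᵢ. -/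
open TensorProduct

/-!
Let `πᵢ` be the projection of `C` onto `Dᵢ` along the other summands. Because every `Dⱼ` is a
subcoalgebra, `Δ ∘ πᵢ = (πᵢ ⊗ πᵢ) ∘ Δ`: on `Dᵢ` both sides are `Δ`, and on `Dⱼ` with `j ≠ i` both
vanish since `Δ(Dⱼ) ⊆ Dⱼ ⊗ Dⱼ`. Moreover `πᵢ` maps `⨆ⱼ Vⱼ` into `Vᵢ` and `C` onto `Dᵢ`. Hence if
`Δ x ∈ (⨆ Vⱼ) ⊗ C + C ⊗ (⨆ V′ⱼ)`, then `Δ (πᵢ x) ∈ Vᵢ ⊗ Dᵢ + Dᵢ ⊗ V′ᵢ`, so every component of `x`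
lies in the wedge product computed in `Dᵢ`. The reverse inclusion is monotonicity of the wedge.
-/

namespace DirectSum

variable {ι R M : Type*} [DecidableEq ι] [Semiring R] [AddCommMonoid M] [Module R M]
  (ℳ : ι → Submodule R M) [Decomposition ℳ]

noncomputable def decomposeProj (i : ι) : M →ₗ[R] M :=
  (ℳ i).subtype ∘ₗ component R ι (fun i ↦ ℳ i) i ∘ₗ (decomposeLinearEquiv ℳ).toLinearMap

variable {ℳ}

@[simp]
theorem decomposeProj_apply (i : ι) (x : M) : decomposeProj ℳ i x = decompose ℳ x i := rfl

theorem range_decomposeProj_le (i : ι) : LinearMap.range (decomposeProj ℳ i) ≤ ℳ i := by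
  rintro _ ⟨x, rfl⟩
  exact (decompose ℳ x i).2

theorem map_decomposeProj_iSup_le {V : ι → Submodule R M} (hV : ∀ j, V j ≤ ℳ j) (i : ι) :
    (⨆ j, V j).map (decomposeProj ℳ i) ≤ V i := by
  rw [Submodule.map_iSup]
  refine iSup_le fun j ↦ Submodule.map_le_iff_le_comap.2 fun v hv ↦ ?_
  obtain rfl | hji := eq_or_ne j i
  · simpa [decompose_of_mem_same ℳ (hV j hv)] using hv
  · simp [decompose_of_mem_ne ℳ (hV j hv) hji]

end DirectSum

section TensorImage

variable {k C : Type*} [Field k] [AddCommGroup C] [Module k C]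

theorem tensorImage_mono {A A' B B' : Submodule k C} (hA : A ≤ A') (hB : B ≤ B') :
    tensorImage A B ≤ tensorImage A' B' := by
  rintro _ ⟨t, rfl⟩
  refine ⟨TensorProduct.map (Submodule.inclusion hA) (Submodule.inclusion hB) t, ?_⟩
  rw [← LinearMap.comp_apply, ← TensorProduct.map_comp]
  rfl

theorem map_tensorImage (f g : C →ₗ[k] C) (A B : Submodule k C) :
    (tensorImage A B).map (TensorProduct.map f g) = tensorImage (A.map f) (B.map g) := by
  have hf : f ∘ₗ A.subtype = (A.map f).subtype ∘ₗ f.submoduleMap A := rfl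
  have hg : g ∘ₗ B.subtype = (B.map g).subtype ∘ₗ g.submoduleMap B := rfl
  rw [tensorImage, tensorImage, ← LinearMap.range_comp, ← TensorProduct.map_comp, hf, hg,
    TensorProduct.map_comp, LinearMap.range_comp_of_range_eq_top]
  exact LinearMap.range_eq_top.2 <| TensorProduct.map_surjective
    (f.submoduleMap_surjective A) (g.submoduleMap_surjective B)

theorem map_eq_of_eqOn_of_mem_tensorImage {f f' g g' : C →ₗ[k] C} {A B : Submodule k C}
    (hf : Set.EqOn f f' A) (hg : Set.EqOn g g' B) {t : C ⊗[k] C} (ht : t ∈ tensorImage A B) :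
    TensorProduct.map f g t = TensorProduct.map f' g' t := by
  obtain ⟨s, rfl⟩ := ht
  have hfA : f ∘ₗ A.subtype = f' ∘ₗ A.subtype := LinearMap.ext fun x ↦ hf x.2
  have hgB : g ∘ₗ B.subtype = g' ∘ₗ B.subtype := LinearMap.ext fun x ↦ hg x.2
  simp only [← LinearMap.comp_apply, ← TensorProduct.map_comp, hfA, hgB]

end TensorImage

section Coalgebra

open DirectSum

variable {k C ι : Type*} [Field k] [AddCommGroup C] [Module k C] [Coalgebra k C] [DecidableEq ι]
  {D : ι → Submodule k C} [Decomposition D]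

theorem comul_comp_decomposeProj
    (hD : ∀ i, D i ≤ (tensorImage (D i) (D i)).comap (Coalgebra.comul (R := k) (A := C)))
    (i : ι) :
    Coalgebra.comul ∘ₗ decomposeProj D i =
      TensorProduct.map (decomposeProj D i) (decomposeProj D i) ∘ₗ Coalgebra.comul := by
  refine decompose_lhom_ext D fun j ↦ LinearMap.ext fun ⟨x, hx⟩ ↦ ?_
  have hΔx := hD j hx
  obtain rfl | hji := eq_or_ne j i
  · have hid : Set.EqOn (decomposeProj D j) (LinearMap.id : C →ₗ[k] C) (D j) := fun y hy ↦
      decompose_of_mem_same D hy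
    simp [decompose_of_mem_same D hx, map_eq_of_eqOn_of_mem_tensorImage hid hid hΔx]
  · have hzero : Set.EqOn (decomposeProj D i) (0 : C →ₗ[k] C) (D j) := fun y hy ↦
      decompose_of_mem_ne D hy hji
    simp [decompose_of_mem_ne D hx hji, map_eq_of_eqOn_of_mem_tensorImage hzero hzero hΔx]

theorem comul_decompose_mem_of_mem_wedge
    (hD : ∀ i, D i ≤ (tensorImage (D i) (D i)).comap (Coalgebra.comul (R := k) (A := C)))
    {V V' : ι → Submodule k C} (hV : ∀ i, V i ≤ D i) (hV' : ∀ i, V' i ≤ D i)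
    {x : C} (hx : x ∈ wedge (⨆ i, V i) (⨆ i, V' i)) (i : ι) :
    Coalgebra.comul (R := k) (decompose D x i : C) ∈
      tensorImage (V i) (D i) ⊔ tensorImage (D i) (V' i) := by
  have hmap := Submodule.mem_map_of_mem
    (f := TensorProduct.map (decomposeProj D i) (decomposeProj D i)) (Submodule.mem_comap.1 hx)
  rw [Submodule.map_sup, map_tensorImage, map_tensorImage, Submodule.map_top] at hmap
  rw [← decomposeProj_apply, ← LinearMap.comp_apply,
    comul_comp_decomposeProj hD, LinearMap.comp_apply]
  refine SetLike.le_def.1 (sup_le_sup (tensorImage_mono ?_ ?_) (tensorImage_mono ?_ ?_)) hmap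
  exacts [map_decomposeProj_iSup_le hV i, range_decomposeProj_le i,
    range_decomposeProj_le i, map_decomposeProj_iSup_le hV' i]

end Coalgebra

/-- If `C` is the internal direct sum of subcoalgebras `Dᵢ` and `Vᵢ, V′ᵢ ⊆ Dᵢ`, then
`(⨁ᵢ Vᵢ) ∨_C (⨁ᵢ V′ᵢ) = ⨁ᵢ (Vᵢ ∨_{Dᵢ} V′ᵢ)`, where the wedge product in `Dᵢ` is
`{x ∈ Dᵢ | Δ x ∈ Vᵢ ⊗ Dᵢ + Dᵢ ⊗ V′ᵢ}`. -/
theorem wedge_directSum {k C : Type*} [Field k] [AddCommGroup C] [Module k C] [Coalgebra k C]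
    {ι : Type*} (D : ι → Submodule k C)
    (hind : iSupIndep D) (hsup : (⨆ i, D i) = ⊤)
    (hsub : ∀ i, D i ≤ (tensorImage (D i) (D i)).comap (Coalgebra.comul (R := k) (A := C)))
    (V V' : ι → Submodule k C) (hV : ∀ i, V i ≤ D i) (hV' : ∀ i, V' i ≤ D i) :
    wedge (⨆ i, V i) (⨆ i, V' i) =
      ⨆ i, (D i ⊓ (tensorImage (V i) (D i) ⊔ tensorImage (D i) (V' i)).comap
        (Coalgebra.comul (R := k) (A := C))) := by
  classical
  let _ : DirectSum.Decomposition D :=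
    ((DirectSum.isInternal_submodule_iff_iSupIndep_and_iSup_eq_top D).2
      ⟨hind, hsup⟩).chooseDecomposition
  refine le_antisymm (fun x hx ↦ ?_) (iSup_le fun i ↦ inf_le_right.trans ?_)
  · rw [← DirectSum.sum_support_decompose D x]
    exact Submodule.sum_mem _ fun i _ ↦ Submodule.mem_iSup_of_mem i
      ⟨(DirectSum.decompose D x i).2, comul_decompose_mem_of_mem_wedge hsub hV hV' hx i⟩
  · exact Submodule.comap_mono <| sup_le_sup (tensorImage_mono (le_iSup V i) le_top)
      (tensorImage_mono le_top (le_iSup V' i))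
end

section
/- Let k be a field, A a fully RFD k-algebra, I ⊆ A a two-sided ideal, and a ∈ A with a ∉ I. Then there exists a k-linear functional φ : A → k and a two-sided ideal J of A with dim_k(A/J) < ∞ such that φ vanishes on I, φ vanishes on J, and φ(a) ≠ 0. (Equivalently, the set of elements of A annihilated by every functional in the finite dual A° vanishing on I is exactly I; this is a noncommutative Nullstellensatz.) -/
universe u v

/-- A `k`-algebra `A` is fully residually finite-dimensional if every finitely generated left
`A`-module is a subdirect product of finite-dimensional modules, i.e. the intersection of all
submodules of finite `k`-codimension is zero. -/
def FullyRFD (k : Type u) (A : Type v) [Field k] [Ring A] [Algebra k A] : Prop :=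
  ∀ (M : Type v) [AddCommGroup M] [Module k M] [Module A M] [IsScalarTower k A M]
    [Module.Finite A M],
    (⨅ N ∈ {N : Submodule A M | FiniteDimensional k (M ⧸ N.restrictScalars k)}, N) = ⊥

/-- Noncommutative Nullstellensatz for fully RFD algebras: if `I` is a two-sided ideal of a
fully RFD algebra and `a ∉ I`, then some functional in the finite dual vanishing on `I` does
not vanish at `a`. -/
theorem exists_functional_of_not_mem {k : Type u} {A : Type v} [Field k] [Ring A]
    [Algebra k A] (hA : FullyRFD k A) (I : Ideal A) (hI : ∀ x ∈ I, ∀ a : A, x * a ∈ I)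
    (a : A) (ha : a ∉ I) :
    ∃ φ : A →ₗ[k] k, ∃ J : Ideal A, (∀ x ∈ J, ∀ b : A, x * b ∈ J) ∧
      FiniteDimensional k (A ⧸ J.restrictScalars k) ∧
      (∀ x ∈ I, φ x = 0) ∧ (∀ x ∈ J, φ x = 0) ∧ φ a ≠ 0 := by
  classical
  set M := A ⧸ I with hM
  have hbot := hA M
  have hamk : (Submodule.Quotient.mk a : M) ≠ 0 := by
    simpa [Submodule.Quotient.mk_eq_zero] using ha
  have : ¬ (Submodule.Quotient.mk a : M) ∈
      (⨅ N ∈ {N : Submodule A M | FiniteDimensional k (M ⧸ N.restrictScalars k)}, N) := by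
    rw [hbot]; simpa using hamk
  simp only [Submodule.mem_iInf, not_forall] at this
  obtain ⟨N, hNfd, hNa⟩ := this
  haveI : FiniteDimensional k (M ⧸ N.restrictScalars k) := hNfd
  set J' : Ideal A := N.comap (I.mkQ) with hJ'
  have haJ' : a ∉ J' := hNa
  have hIJ' : ∀ x ∈ I, x ∈ J' := by
    intro x hx
    show I.mkQ x ∈ N
    have h0 : I.mkQ x = 0 := by simpa [Submodule.Quotient.mk_eq_zero] using hx
    rw [h0]; exact N.zero_mem
  have hVfd : FiniteDimensional k (A ⧸ J'.restrictScalars k) := by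
    let f : A →ₗ[k] (M ⧸ N.restrictScalars k) :=
      (N.restrictScalars k).mkQ.comp (I.mkQ.restrictScalars k)
    have hker : LinearMap.ker f = J'.restrictScalars k := by
      ext x
      simp [f, J', Submodule.Quotient.mk_eq_zero]
    have hsurj : Function.Surjective f :=
      (Submodule.mkQ_surjective (N.restrictScalars k)).comp
        (Submodule.mkQ_surjective I)
    have e : (A ⧸ J'.restrictScalars k) ≃ₗ[k] (A ⧸ LinearMap.ker f) :=
      Submodule.quotEquivOfEq _ _ hker.symm
    have e2 := f.quotKerEquivOfSurjective hsurj
    exact FiniteDimensional.of_injective ((e2.toLinearMap).comp e.toLinearMap)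
      (e2.injective.comp e.injective)
  set V := A ⧸ J'.restrictScalars k with hV
  set J : Ideal A :=
    { carrier := {x : A | ∀ b : A, x * b ∈ J'},
      add_mem' := fun hx hy b => by simpa [add_mul] using J'.add_mem (hx b) (hy b),
      zero_mem' := fun b => by simpa using J'.zero_mem,
      smul_mem' := fun c x hx b => by
        simpa [smul_eq_mul, mul_assoc] using J'.smul_mem c (hx b) } with hJ
  have hmemJ : ∀ x : A, x ∈ J ↔ ∀ b : A, x * b ∈ J' := fun x => Iff.rfl
  have hJ2 : ∀ x ∈ J, ∀ b : A, x * b ∈ J := by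
    intro x hx b c
    rw [mul_assoc]
    exact hx (b * c)
  have hIJ : ∀ x ∈ I, x ∈ J := fun x hx b => hIJ' _ (hI x hx b)
  have haJ : a ∉ J := fun h => haJ' (by simpa using h 1)
  have hJfd : FiniteDimensional k (A ⧸ J.restrictScalars k) := by
    let g : A →ₗ[k] (V →ₗ[k] V) :=
      { toFun := fun x => Submodule.mapQ _ _ (LinearMap.mulLeft k x)
          (fun y hy => J'.smul_mem x hy)
        map_add' := fun x y => by
          ext b
          show Submodule.Quotient.mk ((x + y) * b) =
            (Submodule.Quotient.mk (x * b) : V) + Submodule.Quotient.mk (y * b)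
          rw [add_mul, Submodule.Quotient.mk_add]
        map_smul' := fun c x => by
          ext b
          show Submodule.Quotient.mk ((c • x) * b) =
            c • (Submodule.Quotient.mk (x * b) : V)
          rw [smul_mul_assoc, Submodule.Quotient.mk_smul] }
    have hkerg : LinearMap.ker g = J.restrictScalars k := by
      ext x
      constructor
      · intro hx b
        have h1 : g x (Submodule.Quotient.mk b) = 0 := by
          rw [LinearMap.mem_ker.mp hx]; rfl
        have h2 : (Submodule.Quotient.mk (x * b) : V) = 0 := h1
        simpa [Submodule.Quotient.mk_eq_zero] using h2
      · intro hx
        rw [LinearMap.mem_ker]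
        ext b
        show (Submodule.Quotient.mk (x * b) : V) = 0
        simpa [Submodule.Quotient.mk_eq_zero] using hx b
    have e : (A ⧸ J.restrictScalars k) ≃ₗ[k] (A ⧸ LinearMap.ker g) :=
      Submodule.quotEquivOfEq _ _ hkerg.symm
    have e2 := g.quotKerEquivRange
    exact FiniteDimensional.of_injective ((LinearMap.range g).subtype.comp
      ((e2.toLinearMap).comp e.toLinearMap))
      ((Submodule.injective_subtype _).comp (e2.injective.comp e.injective))
  have hamkJ : (Submodule.Quotient.mk a : A ⧸ J.restrictScalars k) ≠ 0 := by
    simpa [Submodule.Quotient.mk_eq_zero] using haJ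
  haveI := hJfd
  obtain ⟨ψ, hψ⟩ : ∃ ψ : (A ⧸ J.restrictScalars k) →ₗ[k] k,
      ψ (Submodule.Quotient.mk a) ≠ 0 := by
    by_contra h
    push_neg at h
    exact hamkJ ((Module.forall_dual_apply_eq_zero_iff k _).mp h)
  refine ⟨ψ.comp (J.restrictScalars k).mkQ, J, hJ2, hJfd, ?_, ?_, ?_⟩
  · intro x hx
    have h0 : ((J.restrictScalars k).mkQ x) = 0 := by
      simpa [Submodule.Quotient.mk_eq_zero] using hIJ x hx
    simp [h0]
  · intro x hx
    have h0 : ((J.restrictScalars k).mkQ x) = 0 := by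
      simpa [Submodule.Quotient.mk_eq_zero] using hx
    simp [h0]
  · simpa using hψ
end

section
/- Let k be a field, A a finitely generated commutative k-algebra, and M a finitely generated A-module. For each maximal ideal m of A let M_m denote the localization of M at m, and let (M_m)° ⊆ (M_m)* be the space of k-linear functionals on M_m whose kernel contains an A_m-submodule of finite k-codimension. Then the k-linear map ⊕_{m ∈ maxSpec A} (M_m)° → M*, sending a family (φ_m) (almost all zero) to Σ_m φ_m ∘ λ_m, where λ_m : M → M_m is the localization map, is injective and its image is exactly M° = {φ ∈ M* : ker φ contains an A-submodule of finite k-codimension}. Moreover this bijection is A-linear for the actions (a·φ)(x) = φ(a x). -/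
/-!
A functional `ψ ∈ M°` kills an `A`-submodule `P` with `M ⧸ P` finite-dimensional, so `A` acts on
`M ⧸ P` through the Artinian ring `A ⧸ ann (M ⧸ P)`, and `ann (M ⧸ P)` contains `⋂_{m ∈ T} m ^ e`
for finitely many maximal ideals `m`. A Chinese-remainder partition of unity `Σ ε_m ≡ 1` splits
`ψ = Σ_m ψ (ε_m ·)`; since `ε_m • (M ⧸ P)` is killed by `m ^ e`, elements outside `m` act on it
invertibly, so `ψ (ε_m ·)` factors through `M_m`.

Conversely, a functional `φ` on `M_m` killing a submodule of finite codimension also kills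
`m ^ e • M_m` for some `e` (elements outside `m` act surjectively on the finite-dimensional
quotient), and is then determined by `φ ∘ λ_m`. Evaluating `Σ_m φ_m ∘ λ_m` at `v • x` with
`v ≡ 1` modulo `m₀ ^ e` and `v ≡ 0` modulo the other `m ^ e` isolates `φ_{m₀} ∘ λ_{m₀}`, which gives
injectivity.
-/

universe u v

section

variable {k : Type u} {A : Type v} [Field k] [CommRing A] [Algebra k A]

/-- The `k`-module structure on a localized module of an `A`-module, obtained by restriction
of scalars along `k → A`. -/
noncomputable instance LocalizedModule.moduleBase (M : Type v) [AddCommGroup M] [Module A M]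
    (S : Submonoid A) : Module k (LocalizedModule S M) :=
  Module.compHom _ (algebraMap k A)

instance LocalizedModule.isScalarTowerBase (M : Type v) [AddCommGroup M] [Module A M]
    (S : Submonoid A) : IsScalarTower k A (LocalizedModule S M) :=
  ⟨fun c a x => by
    show (c • a) • x = (algebraMap k A c) • (a • x)
    rw [Algebra.smul_def, mul_smul]⟩

/-- `φ` belongs to the finite dual `N°` of the `A`-module `N`: the kernel of the `k`-linear
functional `φ` contains an `A`-submodule of finite `k`-codimension. -/
def MemFiniteDual (N : Type*) [AddCommGroup N] [Module k N] [Module A N]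
    [IsScalarTower k A N] (φ : N →ₗ[k] k) : Prop :=
  ∃ P : Submodule A N, (∀ x ∈ P, φ x = 0) ∧ FiniteDimensional k (N ⧸ P.restrictScalars k)

end

namespace MaximalSpectrum

variable {A : Type*} [CommRing A]

theorem exists_finset_inf_pow_le (J : Ideal A) [IsArtinianRing (A ⧸ J)] :
    ∃ (T : Finset (MaximalSpectrum A)) (e : ℕ), T.inf (fun m ↦ m.asIdeal ^ e) ≤ J := by
  classical
  have : Fintype (MaximalSpectrum (A ⧸ J)) := Fintype.ofFinite _
  let π := Ideal.Quotient.mk J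
  have hπ : Function.Surjective π := Ideal.Quotient.mk_surjective
  let pullback (I : MaximalSpectrum (A ⧸ J)) : MaximalSpectrum A :=
    ⟨I.asIdeal.comap π, Ideal.comap_isMaximal_of_surjective π hπ⟩
  obtain ⟨e, he⟩ := IsArtinianRing.isNilpotent_nilradical (R := A ⧸ J)
  refine ⟨Finset.univ.image pullback, e, ?_⟩
  calc (Finset.univ.image pullback).inf (fun m ↦ m.asIdeal ^ e)
      = ⨅ I : MaximalSpectrum (A ⧸ J), I.asIdeal.comap π ^ e := by
        rw [Finset.inf_image, Finset.inf_univ_eq_iInf]; rfl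
    _ ≤ ⨅ I : MaximalSpectrum (A ⧸ J), (I.asIdeal ^ e).comap π :=
        iInf_mono fun I ↦ Ideal.le_comap_pow π e
    _ = J := by
        rw [← Ideal.comap_iInf, ← IsArtinianRing.nilradical_pow_eq_iInf, he, Ideal.zero_eq_bot,
          ← RingHom.ker_eq_comap_bot, Ideal.mk_ker]

theorem exists_sub_one_mem_pow_and_mem_pow (T : Finset (MaximalSpectrum A))
    (e : MaximalSpectrum A → ℕ) {m : MaximalSpectrum A} (hm : m ∈ T) :
    ∃ v : A, v - 1 ∈ m.asIdeal ^ e m ∧ ∀ m' ∈ T, m' ≠ m → v ∈ m'.asIdeal ^ e m' := by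
  classical
  have hcop : Pairwise (Function.onFun IsCoprime fun m' : T ↦ m'.1.asIdeal ^ e m') :=
    fun m₁ m₂ h ↦ (isCoprime_of_ne (Subtype.coe_ne_coe.2 h)).pow
  obtain ⟨v, hv⟩ := Ideal.exists_forall_sub_mem_ideal hcop (Pi.single ⟨m, hm⟩ 1)
  refine ⟨v, by simpa using hv ⟨m, hm⟩, fun m' hm' hne ↦ ?_⟩
  simpa [Pi.single_apply, hne] using hv ⟨m', hm'⟩

theorem exists_partition_of_unity (T : Finset (MaximalSpectrum A)) (e : ℕ) :
    ∃ ε : MaximalSpectrum A → A, (∑ m ∈ T, ε m) - 1 ∈ T.inf (fun m ↦ m.asIdeal ^ e) ∧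
      ∀ m ∈ T, ∀ a ∈ m.asIdeal ^ e, ε m * a ∈ T.inf (fun m ↦ m.asIdeal ^ e) := by
  classical
  choose! ε hε1 hε using fun m (hm : m ∈ T) ↦ exists_sub_one_mem_pow_and_mem_pow T (fun _ ↦ e) hm
  refine ⟨ε, Submodule.mem_finsetInf.2 fun m hm ↦ ?_,
    fun m hm a ha ↦ Submodule.mem_finsetInf.2 fun m' hm' ↦ ?_⟩
  · rw [← Finset.add_sum_erase T _ hm, add_sub_right_comm]
    exact add_mem (hε1 m hm) (Ideal.sum_mem _ fun m' hm' ↦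
      hε m' (Finset.mem_of_mem_erase hm') m hm (Finset.ne_of_mem_erase hm').symm)
  · by_cases hm'm : m' = m
    · subst hm'm
      exact Ideal.mul_mem_left _ _ ha
    · exact Ideal.mul_mem_right _ _ (hε m hm m' hm' hm'm)

end MaximalSpectrum

theorem Ideal.IsMaximal.exists_mul_sub_one_mem_pow {A : Type*} [CommRing A] {m : Ideal A}
    (hm : m.IsMaximal) {s : A} (hs : s ∉ m) (e : ℕ) : ∃ c : A, c * s - 1 ∈ m ^ e := by
  obtain ⟨y, i, hi, hyi⟩ := hm.exists_inv hs
  have hcop : IsCoprime (Ideal.span {s}) m := Ideal.isCoprime_iff_exists.2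
    ⟨y * s, Ideal.mul_mem_left _ _ (Ideal.mem_span_singleton_self s), i, hi, hyi⟩
  obtain ⟨a, ha, b, hb, hab⟩ := Ideal.isCoprime_iff_exists.1 (hcop.pow_right (n := e))
  obtain ⟨c, rfl⟩ := Ideal.mem_span_singleton'.1 ha
  exact ⟨c, by rwa [← hab, sub_add_cancel_left, neg_mem_iff]⟩

theorem Module.isUnit_algebraMap_end_of_pow_le_annihilator {A N : Type*} [CommRing A]
    [AddCommGroup N] [Module A N] {m : Ideal A} (hm : m.IsMaximal) {e : ℕ}
    (he : m ^ e ≤ Module.annihilator A N) {s : A} (hs : s ∉ m) :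
    IsUnit (algebraMap A (Module.End A N) s) := by
  obtain ⟨c, hc⟩ := hm.exists_mul_sub_one_mem_pow hs e
  have hcs : ∀ x : N, (c * s) • x = x := fun x ↦ by
    rw [← sub_eq_zero, ← Module.mem_annihilator.1 (he hc) x, sub_smul, one_smul]
  refine (Module.End.isUnit_iff _).2 ⟨fun x y hxy ↦ ?_, fun x ↦ ⟨c • x, ?_⟩⟩
  · rw [← hcs x, ← hcs y, mul_smul, mul_smul]
    exact congrArg (c • ·) hxy
  · simp only [Module.algebraMap_end_apply, ← mul_smul, mul_comm s c, hcs]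

section FiniteDual

variable {k : Type*} {A : Type*} [Field k] [CommRing A] [Algebra k A]

theorem Submodule.finiteDimensional_quotient_inf {V : Type*} [AddCommGroup V] [Module k V]
    (P P' : Submodule k V) [FiniteDimensional k (V ⧸ P)] [FiniteDimensional k (V ⧸ P')] :
    FiniteDimensional k (V ⧸ (P ⊓ P')) := by
  have e := (P.mkQ.prod P'.mkQ).quotKerEquivRange
  rw [LinearMap.ker_prod, Submodule.ker_mkQ, Submodule.ker_mkQ] at e
  exact e.symm.finiteDimensional

theorem Submodule.finiteDimensional_quotient_comap {V W : Type*} [AddCommGroup V] [Module k V]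
    [AddCommGroup W] [Module k W] (f : V →ₗ[k] W) (P : Submodule k W)
    [FiniteDimensional k (W ⧸ P)] : FiniteDimensional k (V ⧸ P.comap f) := by
  have e := (P.mkQ.comp f).quotKerEquivRange
  rw [LinearMap.ker_comp, Submodule.ker_mkQ] at e
  exact e.symm.finiteDimensional

variable (k A) in
def finiteDual (N : Type*) [AddCommGroup N] [Module k N] [Module A N] [IsScalarTower k A N] :
    Submodule k (N →ₗ[k] k) where
  carrier := {φ | MemFiniteDual (A := A) N φ}
  zero_mem' := ⟨⊤, fun _ _ ↦ rfl, inferInstanceAs (FiniteDimensional k (N ⧸ (⊤ : Submodule k N)))⟩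
  add_mem' := by
    rintro φ φ' ⟨P, hP, hPfd⟩ ⟨P', hP', hP'fd⟩
    exact ⟨P ⊓ P', fun x hx ↦ by simp [hP x hx.1, hP' x hx.2],
      Submodule.finiteDimensional_quotient_inf (P.restrictScalars k) (P'.restrictScalars k)⟩
  smul_mem' := by
    rintro c φ ⟨P, hP, hPfd⟩
    exact ⟨P, fun x hx ↦ by simp [hP x hx], hPfd⟩

variable {N N' : Type*} [AddCommGroup N] [Module k N] [Module A N] [IsScalarTower k A N]
  [AddCommGroup N'] [Module k N'] [Module A N'] [IsScalarTower k A N']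

theorem memFiniteDual_of_finiteDimensional [FiniteDimensional k N] (φ : N →ₗ[k] k) :
    MemFiniteDual (A := A) N φ :=
  ⟨⊥, fun x hx ↦ by rw [(Submodule.mem_bot A).1 hx, map_zero], inferInstance⟩

theorem MemFiniteDual.comp {χ : N' →ₗ[k] k} (hχ : MemFiniteDual (A := A) N' χ) (f : N →ₗ[A] N') :
    MemFiniteDual (A := A) N (χ ∘ₗ f.restrictScalars k) := by
  obtain ⟨P, hP, hPfd⟩ := hχ
  exact ⟨P.comap f, fun x hx ↦ hP (f x) hx,
    Submodule.finiteDimensional_quotient_comap (f.restrictScalars k) (P.restrictScalars k)⟩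

end FiniteDual

section Localization

variable {k : Type*} {A : Type*} [Field k] [CommRing A] [Algebra k A]

theorem Module.finiteDimensional_quotient_annihilator (N : Type*) [AddCommGroup N] [Module k N]
    [Module A N] [IsScalarTower k A N] [FiniteDimensional k N] :
    FiniteDimensional k (A ⧸ Module.annihilator A N) := by
  let ρ : A →ₐ[k] Module.End k N := Algebra.lsmul k k N
  have hker : Module.annihilator A N = RingHom.ker ρ := by
    ext a
    simp [ρ, Module.mem_annihilator, LinearMap.ext_iff]
  have : FiniteDimensional k (Module.End k N) := inferInstanceAs (FiniteDimensional k (N →ₗ[k] N))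
  rw [hker]
  exact .of_injective (Ideal.kerLiftAlg ρ).toLinearMap (Ideal.kerLiftAlg_injective ρ)

theorem MaximalSpectrum.exists_finset_inf_pow_le_annihilator (N : Type*) [AddCommGroup N]
    [Module k N] [Module A N] [IsScalarTower k A N] [FiniteDimensional k N] :
    ∃ (T : Finset (MaximalSpectrum A)) (e : ℕ),
      T.inf (fun m ↦ m.asIdeal ^ e) ≤ Module.annihilator A N := by
  have := Module.finiteDimensional_quotient_annihilator (k := k) (A := A) N
  have : IsArtinianRing (A ⧸ Module.annihilator A N) := isArtinian_of_tower k inferInstance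
  exact exists_finset_inf_pow_le _

theorem MaximalSpectrum.exists_pow_le_annihilator_of_surjective_smul (N : Type*) [AddCommGroup N]
    [Module k N] [Module A N] [IsScalarTower k A N] [FiniteDimensional k N] (m : MaximalSpectrum A)
    (hsurj : ∀ s ∉ m.asIdeal, Function.Surjective fun x : N ↦ s • x) :
    ∃ e : ℕ, m.asIdeal ^ e ≤ Module.annihilator A N := by
  classical
  obtain ⟨T, e, hT⟩ := exists_finset_inf_pow_le_annihilator (k := k) (A := A) N
  obtain ⟨v, hv1, hv⟩ :=
    exists_sub_one_mem_pow_and_mem_pow (insert m T) (fun _ ↦ e + 1) (T.mem_insert_self m)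
  have hvm : v ∉ m.asIdeal := fun h ↦ m.isMaximal.ne_top <| (Ideal.eq_top_iff_one _).2 <| by
    simpa using m.asIdeal.sub_mem h (Ideal.pow_le_self e.succ_ne_zero hv1)
  -- `v` acts surjectively on `N`, while `v * a` lies in `T.inf (m' ^ e)` for `a ∈ m ^ (e + 1)`.
  refine ⟨e + 1, fun a ha ↦ Module.mem_annihilator.2 fun x ↦ ?_⟩
  obtain ⟨y, rfl⟩ := hsurj v hvm x
  have hav : a * v ∈ T.inf (fun m ↦ m.asIdeal ^ e) := by
    refine Submodule.mem_finsetInf.2 fun m' hm' ↦ ?_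
    by_cases hm'm : m' = m
    · subst hm'm
      exact Ideal.mul_mem_right _ _ (Ideal.pow_le_pow_right e.le_succ ha)
    · exact Ideal.mul_mem_left _ _
        (Ideal.pow_le_pow_right e.le_succ (hv m' (T.mem_insert_of_mem hm') hm'm))
  simp only [← mul_smul, Module.mem_annihilator.1 (hT hav)]

variable {M : Type*} [AddCommGroup M] [Module A M]

theorem LocalizedModule.surjective_smul_quotient (S : Submonoid A)
    (P : Submodule A (LocalizedModule S M)) {s : A} (hs : s ∈ S) :
    Function.Surjective fun q : LocalizedModule S M ⧸ P ↦ s • q := by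
  have hu := IsLocalizedModule.map_units (LocalizedModule.mkLinearMap S M) ⟨s, hs⟩
  intro q
  obtain ⟨y, rfl⟩ := P.mkQ_surjective q
  obtain ⟨z, hz⟩ := ((Module.End.isUnit_iff _).1 hu).2 y
  exact ⟨P.mkQ z, by simpa [Module.algebraMap_end_apply] using congrArg P.mkQ hz⟩

theorem LocalizedModule.exists_sub_mk_mem_of_pow_le_annihilator (m : MaximalSpectrum A)
    {P : Submodule A (LocalizedModule m.asIdeal.primeCompl M)} {e : ℕ}
    (he : m.asIdeal ^ e ≤ Module.annihilator A (LocalizedModule m.asIdeal.primeCompl M ⧸ P))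
    (y : LocalizedModule m.asIdeal.primeCompl M) :
    ∃ x : M, y - LocalizedModule.mkLinearMap m.asIdeal.primeCompl M x ∈ P := by
  refine LocalizedModule.induction_on (fun x s ↦ ?_) y
  obtain ⟨c, hc⟩ := m.isMaximal.exists_mul_sub_one_mem_pow s.2 e
  refine ⟨c • x, ?_⟩
  have hy : (c * s - 1) • LocalizedModule.mk x s ∈ P := by
    rw [← Submodule.Quotient.mk_eq_zero, Submodule.Quotient.mk_smul]
    exact Module.mem_annihilator.1 (he hc) _
  have hcx : LocalizedModule.mkLinearMap m.asIdeal.primeCompl M (c • x) =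
      (c * s) • LocalizedModule.mk x s := by
    rw [mul_smul, LocalizedModule.smul'_mk, show (s : A) • x = s • x from rfl,
      LocalizedModule.mk_cancel, map_smul]
    rfl
  rw [hcx, ← neg_mem_iff]
  convert hy using 1
  module

end Localization

section FiniteDualLocalization

variable {k : Type u} {A : Type v} [Field k] [CommRing A] [Algebra k A]
  {M : Type v} [AddCommGroup M] [Module A M] {m : MaximalSpectrum A}
  {φ : LocalizedModule m.asIdeal.primeCompl M →ₗ[k] k}

theorem MemFiniteDual.exists_pow_le_annihilator
    (hφ : MemFiniteDual (A := A) (LocalizedModule m.asIdeal.primeCompl M) φ) :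
    ∃ (P : Submodule A (LocalizedModule m.asIdeal.primeCompl M)) (e : ℕ), (∀ y ∈ P, φ y = 0) ∧
      m.asIdeal ^ e ≤ Module.annihilator A (LocalizedModule m.asIdeal.primeCompl M ⧸ P) := by
  obtain ⟨P, hP, hPfd⟩ := hφ
  have := (Submodule.Quotient.restrictScalarsEquiv k P).finiteDimensional
  obtain ⟨e, he⟩ := MaximalSpectrum.exists_pow_le_annihilator_of_surjective_smul (k := k) _ m
    fun s hs ↦ LocalizedModule.surjective_smul_quotient _ P hs
  exact ⟨P, e, hP, he⟩

theorem MemFiniteDual.exists_pow_smul_eq_zero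
    (hφ : MemFiniteDual (A := A) (LocalizedModule m.asIdeal.primeCompl M) φ) :
    ∃ e : ℕ, ∀ a ∈ m.asIdeal ^ e, ∀ y, φ (a • y) = 0 := by
  obtain ⟨P, e, hP, he⟩ := hφ.exists_pow_le_annihilator
  refine ⟨e, fun a ha y ↦ hP _ <| (Submodule.Quotient.mk_eq_zero _).1 ?_⟩
  rw [Submodule.Quotient.mk_smul]
  exact Module.mem_annihilator.1 (he ha) _

theorem MemFiniteDual.eq_zero_of_forall_mkLinearMap_eq_zero
    (hφ : MemFiniteDual (A := A) (LocalizedModule m.asIdeal.primeCompl M) φ)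
    (h : ∀ x : M, φ (LocalizedModule.mkLinearMap m.asIdeal.primeCompl M x) = 0) : φ = 0 := by
  obtain ⟨P, e, hP, he⟩ := hφ.exists_pow_le_annihilator
  refine LinearMap.ext fun y ↦ ?_
  obtain ⟨x, hx⟩ := LocalizedModule.exists_sub_mk_mem_of_pow_le_annihilator m he y
  have hy := hP _ hx
  rwa [map_sub, h, sub_zero] at hy

theorem exists_memFiniteDual_comp_mkLinearMap_eq {N : Type*} [AddCommGroup N] [Module k N]
    [Module A N] [IsScalarTower k A N] [FiniteDimensional k N] {e : ℕ}
    (he : m.asIdeal ^ e ≤ Module.annihilator A N) (u : M →ₗ[A] N) (χ : N →ₗ[k] k) :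
    ∃ φ : LocalizedModule m.asIdeal.primeCompl M →ₗ[k] k,
      MemFiniteDual (A := A) _ φ ∧
        ∀ x, φ (LocalizedModule.mkLinearMap m.asIdeal.primeCompl M x) = χ (u x) := by
  have hu (s : m.asIdeal.primeCompl) : IsUnit (algebraMap A (Module.End A N) s) :=
    Module.isUnit_algebraMap_end_of_pow_le_annihilator m.isMaximal he s.2
  let g := LocalizedModule.lift _ u hu
  exact ⟨χ ∘ₗ g.restrictScalars k, (memFiniteDual_of_finiteDimensional χ).comp g,
    fun x ↦ congrArg χ (LinearMap.congr_fun (LocalizedModule.lift_comp _ u hu) x)⟩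

end FiniteDualLocalization

section SumOverMaximalIdeals

variable {k : Type u} {A : Type v} [Field k] [CommRing A] [Algebra k A]
  {M : Type v} [AddCommGroup M] [Module A M]

theorem eq_zero_of_forall_sum_mkLinearMap_eq_zero (T : Finset (MaximalSpectrum A))
    {φ : ∀ m : MaximalSpectrum A, LocalizedModule m.asIdeal.primeCompl M →ₗ[k] k}
    (hφ : ∀ m, MemFiniteDual (A := A) _ (φ m))
    (hsum : ∀ x : M, ∑ m ∈ T, φ m (LocalizedModule.mkLinearMap m.asIdeal.primeCompl M x) = 0) :
    ∀ m ∈ T, φ m = 0 := by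
  choose e he using fun m ↦ (hφ m).exists_pow_smul_eq_zero
  intro m₀ hm₀
  obtain ⟨v, hv1, hv⟩ := MaximalSpectrum.exists_sub_one_mem_pow_and_mem_pow T e hm₀
  refine (hφ m₀).eq_zero_of_forall_mkLinearMap_eq_zero fun x ↦ ?_
  have h := hsum (v • x)
  rw [Finset.sum_eq_single_of_mem m₀ hm₀ fun m hm hne ↦ by
    rw [map_smul]; exact he m v (hv m hm hne) _] at h
  calc φ m₀ (LocalizedModule.mkLinearMap m₀.asIdeal.primeCompl M x)
      = φ m₀ (LocalizedModule.mkLinearMap m₀.asIdeal.primeCompl M (v • x)) -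
        φ m₀ ((v - 1) • LocalizedModule.mkLinearMap m₀.asIdeal.primeCompl M x) := by
        rw [map_smul, sub_smul, one_smul, map_sub, sub_sub_cancel]
    _ = 0 := by rw [h, he m₀ _ hv1, sub_zero]

theorem exists_sum_mkLinearMap_eq [Module k M] [IsScalarTower k A M] {ψ : M →ₗ[k] k}
    (hψ : MemFiniteDual (A := A) M ψ) :
    ∃ (T : Finset (MaximalSpectrum A))
      (φ : ∀ m : MaximalSpectrum A, LocalizedModule m.asIdeal.primeCompl M →ₗ[k] k),
      (∀ m, MemFiniteDual (A := A) _ (φ m)) ∧ (∀ m ∉ T, φ m = 0) ∧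
      ∀ x : M, ∑ m ∈ T, φ m (LocalizedModule.mkLinearMap m.asIdeal.primeCompl M x) = ψ x := by
  classical
  obtain ⟨P, hP, hPfd⟩ := hψ
  have : FiniteDimensional k (M ⧸ P) :=
    (Submodule.Quotient.restrictScalarsEquiv k P).finiteDimensional
  obtain ⟨ψ', hψ'⟩ : ∃ ψ' : (M ⧸ P) →ₗ[k] k, ∀ x, ψ' (P.mkQ x) = ψ x :=
    ⟨(P.restrictScalars k).liftQ ψ hP ∘ₗ
      (Submodule.Quotient.restrictScalarsEquiv k P).symm.toLinearMap, fun _ ↦ rfl⟩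
  obtain ⟨T, e, hT⟩ :=
    MaximalSpectrum.exists_finset_inf_pow_le_annihilator (k := k) (A := A) (M ⧸ P)
  obtain ⟨ε, hε1, hε⟩ := MaximalSpectrum.exists_partition_of_unity T e
  let N (m : MaximalSpectrum A) := LinearMap.range (ε m • P.mkQ)
  have (m : MaximalSpectrum A) : FiniteDimensional k (N m) :=
    inferInstanceAs (FiniteDimensional k ((N m).restrictScalars k))
  have hN (m) (hm : m ∈ T) : m.asIdeal ^ e ≤ Module.annihilator A (N m) := by
    refine fun a ha ↦ Module.mem_annihilator.2 ?_
    rintro ⟨_, x, rfl⟩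
    ext
    simp [← mul_smul, mul_comm a, Module.mem_annihilator.1 (hT (hε m hm a ha))]
  choose! φ hφ hφx using fun m (hm : m ∈ T) ↦ exists_memFiniteDual_comp_mkLinearMap_eq (hN m hm)
    (ε m • P.mkQ).rangeRestrict (ψ' ∘ₗ (N m).subtype.restrictScalars k)
  refine ⟨T, fun m ↦ if m ∈ T then φ m else 0, fun m ↦ ?_, fun m hm ↦ if_neg hm, fun x ↦ ?_⟩
  · dsimp only
    split_ifs with hm
    exacts [hφ m hm, zero_mem (finiteDual k A _)]
  · have hunit : (∑ m ∈ T, ε m) • P.mkQ x = P.mkQ x := by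
      rw [← sub_eq_zero, ← Module.mem_annihilator.1 (hT hε1) (P.mkQ x), sub_smul, one_smul]
    calc ∑ m ∈ T, (if m ∈ T then φ m else 0) (LocalizedModule.mkLinearMap _ M x)
        = ∑ m ∈ T, ψ' (ε m • P.mkQ x) :=
          Finset.sum_congr rfl fun m hm ↦ by rw [if_pos hm, hφx m hm]; rfl
      _ = ψ' ((∑ m ∈ T, ε m) • P.mkQ x) := by rw [Finset.sum_smul, map_sum]
      _ = ψ x := by rw [hunit, hψ']

end SumOverMaximalIdeals

section SumLocalizations

variable {k : Type u} {A : Type v} [Field k] [CommRing A] [Algebra k A]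
  {M : Type v} [AddCommGroup M] [Module k M] [Module A M] [IsScalarTower k A M]

variable (M) in
noncomputable def sumLocalizations
    (φ : ∀ m : MaximalSpectrum A, LocalizedModule m.asIdeal.primeCompl M →ₗ[k] k) : M →ₗ[k] k :=
  ∑ᶠ m, (φ m).comp ((LocalizedModule.mkLinearMap m.asIdeal.primeCompl M).restrictScalars k)

variable {φ φ' : ∀ m : MaximalSpectrum A, LocalizedModule m.asIdeal.primeCompl M →ₗ[k] k}

theorem sumLocalizations_eq_sum {T : Finset (MaximalSpectrum A)} (hT : ∀ m ∉ T, φ m = 0) :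
    sumLocalizations M φ =
      ∑ m ∈ T,
        (φ m).comp ((LocalizedModule.mkLinearMap m.asIdeal.primeCompl M).restrictScalars k) :=
  finsum_eq_sum_of_support_subset _ fun m hm ↦ by_contra fun h ↦ hm (by simp [hT m h])

theorem sumLocalizations_apply {T : Finset (MaximalSpectrum A)} (hT : ∀ m ∉ T, φ m = 0) (x : M) :
    sumLocalizations M φ x =
      ∑ m ∈ T, φ m (LocalizedModule.mkLinearMap m.asIdeal.primeCompl M x) := by
  rw [sumLocalizations_eq_sum hT, LinearMap.sum_apply]
  rfl

theorem sumLocalizations_injOn (hfin : {m | φ m ≠ 0}.Finite) (hfin' : {m | φ' m ≠ 0}.Finite)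
    (hφ : ∀ m, MemFiniteDual (A := A) _ (φ m)) (hφ' : ∀ m, MemFiniteDual (A := A) _ (φ' m))
    (h : sumLocalizations M φ = sumLocalizations M φ') : φ = φ' := by
  classical
  let T := hfin.toFinset ∪ hfin'.toFinset
  have hT (m) (hm : m ∉ T) : φ m = 0 ∧ φ' m = 0 := by
    simpa [T, not_or] using hm
  have hzero := eq_zero_of_forall_sum_mkLinearMap_eq_zero T (φ := φ - φ')
    (fun m ↦ sub_mem (hφ m) (hφ' m) : ∀ m, φ m - φ' m ∈ finiteDual k A _) fun x ↦ by
      simp only [Pi.sub_apply, LinearMap.sub_apply, Finset.sum_sub_distrib]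
      rw [← sumLocalizations_apply (fun m hm ↦ (hT m hm).1),
        ← sumLocalizations_apply (fun m hm ↦ (hT m hm).2), h, sub_self]
  funext m
  by_cases hm : m ∈ T
  · exact sub_eq_zero.1 (hzero m hm)
  · rw [(hT m hm).1, (hT m hm).2]

theorem memFiniteDual_sumLocalizations (hfin : {m | φ m ≠ 0}.Finite)
    (hφ : ∀ m, MemFiniteDual (A := A) _ (φ m)) :
    MemFiniteDual (A := A) M (sumLocalizations M φ) := by
  rw [sumLocalizations_eq_sum (T := hfin.toFinset) (by simp)]
  exact Submodule.sum_mem (finiteDual k A M) fun m _ ↦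
    (hφ m).comp (LocalizedModule.mkLinearMap _ M)

theorem exists_sumLocalizations_eq {ψ : M →ₗ[k] k} (hψ : MemFiniteDual (A := A) M ψ) :
    ∃ φ : ∀ m : MaximalSpectrum A, LocalizedModule m.asIdeal.primeCompl M →ₗ[k] k,
      ({m | φ m ≠ 0}.Finite ∧ ∀ m, MemFiniteDual (A := A) _ (φ m)) ∧ sumLocalizations M φ = ψ := by
  obtain ⟨T, φ, hφ, hT, hsum⟩ := exists_sum_mkLinearMap_eq hψ
  exact ⟨φ, ⟨T.finite_toSet.subset fun m hm ↦ by_contra fun h ↦ hm (hT m h), hφ⟩,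
    LinearMap.ext fun x ↦ (sumLocalizations_apply hT x).trans (hsum x)⟩

theorem sumLocalizations_comp_smul (hfin : {m | φ m ≠ 0}.Finite) (a : A) (x : M) :
    sumLocalizations M (fun m ↦ φ m ∘ₗ
      ((a • LinearMap.id : LocalizedModule m.asIdeal.primeCompl M →ₗ[A] _).restrictScalars k)) x =
      sumLocalizations M φ (a • x) := by
  have hT : ∀ m ∉ hfin.toFinset, φ m = 0 := by simp
  rw [sumLocalizations_apply (T := hfin.toFinset) fun m hm ↦ by simp [hT m hm],
    sumLocalizations_apply hT]
  simp

end SumLocalizations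

theorem finiteDual_eq_directSum_localizations_general {k : Type u} {A : Type v} [Field k] [CommRing A]
    [Algebra k A] (M : Type v) [AddCommGroup M] [Module k M]
    [Module A M] [IsScalarTower k A M] :
    letI Loc : MaximalSpectrum A → Type v :=
      fun m => LocalizedModule m.asIdeal.primeCompl M
    letI lam : ∀ m : MaximalSpectrum A, M →ₗ[k] Loc m :=
      fun m => (LocalizedModule.mkLinearMap m.asIdeal.primeCompl M).restrictScalars k
    letI Adm : (∀ m : MaximalSpectrum A, Loc m →ₗ[k] k) → Prop :=
      fun φ => {m | φ m ≠ 0}.Finite ∧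
        ∀ m, MemFiniteDual (A := A) (Loc m) (φ m)
    letI F : (∀ m : MaximalSpectrum A, Loc m →ₗ[k] k) → (M →ₗ[k] k) :=
      fun φ => ∑ᶠ m, (φ m).comp (lam m)
    -- injectivity
    (∀ φ φ', Adm φ → Adm φ' → F φ = F φ' → φ = φ') ∧
    -- the image is exactly the finite dual `M°`
    (∀ ψ : M →ₗ[k] k, MemFiniteDual (A := A) M ψ ↔ ∃ φ, Adm φ ∧ F φ = ψ) ∧
    -- `A`-linearity for the transposed actions
    (∀ φ, Adm φ → ∀ a : A, ∃ ψ, Adm ψ ∧ (∀ m x, ψ m x = φ m (a • x)) ∧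
      ∀ x : M, F ψ x = F φ (a • x)) := by
  refine ⟨fun φ φ' hφ hφ' ↦ sumLocalizations_injOn hφ.1 hφ'.1 hφ.2 hφ'.2,
    fun ψ ↦ ⟨exists_sumLocalizations_eq, ?_⟩, fun φ hφ a ↦ ?_⟩
  · rintro ⟨φ, hφ, rfl⟩
    exact memFiniteDual_sumLocalizations hφ.1 hφ.2
  · refine ⟨fun m ↦ φ m ∘ₗ
      ((a • LinearMap.id : LocalizedModule m.asIdeal.primeCompl M →ₗ[A] _).restrictScalars k),
      ⟨hφ.1.subset fun m hm h ↦ hm (by simp [h]), fun m ↦ (hφ.2 m).comp _⟩,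
      fun m x ↦ rfl, sumLocalizations_comp_smul hφ.1 a⟩

/-- For a finitely generated module `M` over a finitely generated commutative algebra `A` over
a field `k`, the map `(φ_m)_m ↦ Σ_m φ_m ∘ λ_m` identifies the direct sum of the finite duals
of the localizations `M_m` at the maximal ideals of `A` with the finite dual `M°`, and this
identification is `A`-linear for the transposed actions. -/
theorem finiteDual_eq_directSum_localizations {k : Type u} {A : Type v} [Field k] [CommRing A]
    [Algebra k A] [Algebra.FiniteType k A] (M : Type v) [AddCommGroup M] [Module k M]
    [Module A M] [IsScalarTower k A M] [Module.Finite A M] :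
    letI Loc : MaximalSpectrum A → Type v :=
      fun m => LocalizedModule m.asIdeal.primeCompl M
    letI lam : ∀ m : MaximalSpectrum A, M →ₗ[k] Loc m :=
      fun m => (LocalizedModule.mkLinearMap m.asIdeal.primeCompl M).restrictScalars k
    letI Adm : (∀ m : MaximalSpectrum A, Loc m →ₗ[k] k) → Prop :=
      fun φ => {m | φ m ≠ 0}.Finite ∧
        ∀ m, MemFiniteDual (A := A) (Loc m) (φ m)
    letI F : (∀ m : MaximalSpectrum A, Loc m →ₗ[k] k) → (M →ₗ[k] k) :=
      fun φ => ∑ᶠ m, (φ m).comp (lam m)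
    -- injectivity
    (∀ φ φ', Adm φ → Adm φ' → F φ = F φ' → φ = φ') ∧
    -- the image is exactly the finite dual `M°`
    (∀ ψ : M →ₗ[k] k, MemFiniteDual (A := A) M ψ ↔ ∃ φ, Adm φ ∧ F φ = ψ) ∧
    -- `A`-linearity for the transposed actions
    (∀ φ, Adm φ → ∀ a : A, ∃ ψ, Adm ψ ∧ (∀ m x, ψ m x = φ m (a • x)) ∧
      ∀ x : M, F ψ x = F φ (a • x)) :=
  finiteDual_eq_directSum_localizations_general M
end

section
/- Let k be a field, X a scheme locally of finite type over k, and U ⊆ X an open subset. If a section s ∈ O_X(U) has zero germ in the stalk O_{X,x} for every point x ∈ U whose residue field κ(x) is a finite extension of k, then s = 0. Equivalently, the canonical map O_X(U) → ∏_{x ∈ U, [κ(x):k] < ∞} O_{X,x} given by taking germs is injective. -/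
open AlgebraicGeometry CategoryTheory TopCat Opposite

universe u

/-!
Vanishing of a section can be tested on affine opens `W ⊆ U`, and an element of the ring
`A = Γ(X, W)` is zero once it vanishes in the localization at every maximal ideal `𝔪`. The point
of `W` corresponding to `𝔪` has stalk `A_𝔪` and residue field `A/𝔪`; since `A` is a finitely
generated `k`-algebra, Zariski's lemma makes `A/𝔪` finite over `k`, so the hypothesis applies there.
-/

lemma IsLocalization.AtPrime.residue_algebraMap_surjective {R S : Type*} [CommRing R]
    [CommRing S] [IsLocalRing S] [Algebra R S] (J : Ideal R) [J.IsMaximal]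
    [IsLocalization.AtPrime S J] :
    Function.Surjective fun a : R ↦ IsLocalRing.residue S (algebraMap R S a) := by
  intro q
  obtain ⟨a, ha⟩ := Ideal.Quotient.mk_surjective ((equivQuotMaximalIdeal J S).symm q)
  exact ⟨a, by rw [← (equivQuotMaximalIdeal J S).apply_symm_apply q, ← ha]; rfl⟩

namespace AlgebraicGeometry

lemma Scheme.Hom.toStalk_comp_stalkMap {R : Type u} [CommRing R] {X : Scheme.{u}}
    (f : X ⟶ Spec (CommRingCat.of R)) (W : X.Opens) (x : X) (hx : x ∈ W) :
    StructureSheaf.toStalk R (f.base x) ≫ f.stalkMap x =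
      (Scheme.ΓSpecIso (CommRingCat.of R)).inv ≫ f.appLE ⊤ W (fun _ _ ↦ trivial) ≫
        X.presheaf.germ W x hx := by
  simp only [Scheme.Hom.appLE, Category.assoc, TopCat.Presheaf.germ_res]
  exact congrArg (_ ≫ ·) (f.germ_stalkMap ⊤ x trivial)

namespace IsAffineOpen

variable {X : Scheme.{u}} {U : X.Opens} (hU : IsAffineOpen U)
include hU

lemma fromSpec_mem (y : Spec Γ(X, U)) : hU.fromSpec y ∈ U :=
  hU.range_fromSpec.subset ⟨y, rfl⟩

lemma finite_residue_fromSpec_of_isMaximal {R : Type u} [CommRing R] [IsJacobsonRing R]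
    (f : X ⟶ Spec (CommRingCat.of R)) [LocallyOfFiniteType f]
    (y : Spec Γ(X, U)) [y.asIdeal.IsMaximal] :
    (StructureSheaf.toStalk R (f.base (hU.fromSpec y)) ≫ f.stalkMap (hU.fromSpec y) ≫
      X.residue (hU.fromSpec y)).hom.Finite := by
  have hy := hU.fromSpec_mem y
  let := X.presheaf.algebra_section_stalk ⟨_, hy⟩
  have : IsLocalization.AtPrime (X.presheaf.stalk (hU.fromSpec y)) y.asIdeal :=
    hU.isLocalization_stalk' y hy
  have hsurj : Function.Surjective (X.presheaf.germ U _ hy ≫ X.residue _) :=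
    IsLocalization.AtPrime.residue_algebraMap_surjective (S := X.presheaf.stalk _) y.asIdeal
  have hft : (f.appLE ⊤ U fun _ _ ↦ trivial).hom.FiniteType :=
    LocallyOfFiniteType.finiteType_appLE f (isAffineOpen_top _) hU _
  -- `rw` cannot be used: the goal is only type-correct up to `Spec R = PrimeSpectrum.Top R`.
  refine (congrArg (fun φ ↦ (φ ≫ X.residue _).hom.Finite)
    (f.toStalk_comp_stalkMap U _ hy)).mpr ?_
  refine RingHom.finite_iff_finiteType_of_isJacobsonRing.mpr ?_
  simp only [Category.assoc, CommRingCat.hom_comp]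
  exact ((RingHom.FiniteType.of_surjective _ hsurj).comp hft).comp
    (RingHom.FiniteType.of_surjective _
      (ConcreteCategory.bijective_of_isIso (Scheme.ΓSpecIso (CommRingCat.of R)).inv).2)

lemma eq_zero_of_germ_fromSpec_eq_zero (s : Γ(X, U))
    (h : ∀ y : Spec Γ(X, U), y.asIdeal.IsMaximal →
      X.presheaf.germ U (hU.fromSpec y) (hU.fromSpec_mem y) s = 0) :
    s = 0 := by
  refine eq_zero_of_localization s fun J hJ ↦ ?_
  let y : PrimeSpectrum Γ(X, U) := ⟨J, hJ.isPrime⟩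
  let := X.presheaf.algebra_section_stalk ⟨hU.fromSpec y, hU.fromSpec_mem y⟩
  have : IsLocalization.AtPrime (X.presheaf.stalk (hU.fromSpec y)) J :=
    hU.isLocalization_stalk' y (hU.fromSpec_mem y)
  let e := IsLocalization.algEquiv J.primeCompl (Localization.AtPrime J)
    (X.presheaf.stalk (hU.fromSpec y))
  apply e.injective
  rw [map_zero, e.commutes]
  exact h y hJ

end IsAffineOpen

end AlgebraicGeometry

/-- On a scheme locally of finite type over a field `k`, a section over an open set `U` whose
germ vanishes at every point of `U` with residue field finite over `k` is zero. -/
theorem section_eq_zero_of_germ_eq_zero {k : Type u} [Field k] (X : Scheme.{u})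
    (f : X ⟶ Spec (CommRingCat.of k)) [LocallyOfFiniteType f]
    (U : X.Opens) (s : Γ(X, U))
    (h : ∀ (x : X) (hx : x ∈ U),
      (letI : Algebra k (X.residueField x) :=
        (StructureSheaf.toStalk k (f.base x) ≫ f.stalkMap x ≫ X.residue x).hom.toAlgebra
       FiniteDimensional k (X.residueField x)) →
      X.presheaf.germ U x hx s = 0) :
    s = 0 := by
  refine TopCat.Presheaf.section_ext X.sheaf U s 0 fun x hx ↦ ?_
  obtain ⟨W, hW, hxW, hWU⟩ :=
    TopologicalSpace.Opens.isBasis_iff_nbhd.mp X.isBasis_affineOpens hx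
  suffices X.presheaf.map (homOfLE hWU).op s = 0 by
    change X.presheaf.germ U x hx s = _
    rw [map_zero, ← X.presheaf.germ_res_apply (homOfLE hWU) x hxW s, this]
    exact map_zero _
  refine hW.eq_zero_of_germ_fromSpec_eq_zero _ fun y hy ↦ ?_
  rw [X.presheaf.germ_res_apply]
  exact h _ _ (hW.finite_residue_fromSpec_of_isMaximal f y)
end

section
/- Let k be an algebraically closed field and let A, B be finitely generated commutative k-algebras. Let f : Spec B → Spec A be a morphism of ringed spaces (a continuous map together with a morphism O_{Spec A} → f_* O_{Spec B} of sheaves of rings) such that for every open U ⊆ Spec A the component O_{Spec A}(U) → O_{Spec B}(f⁻¹(U)) is a homomorphism of k-algebras. Then f is a morphism of schemes: for every point p of Spec B the induced stalk map O_{Spec A, f(p)} → O_{Spec B, p} is a local ring homomorphism, and f coincides with the scheme morphism Spec(φ) induced by the map φ : A → B obtained from f on global sections. -/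
open AlgebraicGeometry CategoryTheory Opposite TopologicalSpace

universe u

/-!
The global sections of `f` give a ring map `φ : A → B`, which is a `k`-algebra map. Comparing
stalks gives `φ⁻¹(q) ⊆ f(q)` for every prime `q` of `B`: the stalk map, local or not, sends
units to units. If `q` is maximal, `B/q` is finite over `k` (Zariski's lemma), so `A/φ⁻¹(q)` is a
domain integral over `k`, hence a field; thus `φ⁻¹(q)` is maximal and equals `f(q)`. As `B` is
Jacobson, every prime is the intersection of the maximal ideals containing it, and `f` preserves
specialization, so `f` and `Spec φ` agree on points. Their stalk maps then agree, being ring maps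
out of a localization of `A` that agree on `A`, and sections are determined by their germs.
-/

theorem Ideal.IsMaximal.comap_algHom_of_finiteType {k A B : Type*} [Field k] [CommRing A]
    [CommRing B] [Algebra k A] [Algebra k B] [Algebra.FiniteType k B] (φ : A →ₐ[k] B)
    (m : Ideal B) [m.IsMaximal] : (m.comap φ).IsMaximal := by
  let := Ideal.Quotient.field m
  have : Module.Finite k (B ⧸ m) := finite_of_finite_type_of_isJacobsonRing k _
  have : Algebra.IsIntegral k (A ⧸ m.comap φ) :=
    Algebra.IsIntegral.of_injective (Ideal.quotientMapₐ m φ le_rfl) Ideal.quotientMap_injective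
  exact Ideal.Quotient.maximal_of_isField _ (isField_of_isIntegral_of_isField' (Field.toIsField k))

theorem Ideal.comap_le_of_comp_algebraMap_eq {R S Rₚ Sₚ : Type*} [CommRing R] [CommRing S]
    [CommRing Rₚ] [CommRing Sₚ] [Algebra R Rₚ] [Algebra S Sₚ] (p : Ideal R) [p.IsPrime]
    (q : Ideal S) [q.IsPrime] [IsLocalization.AtPrime Rₚ p] [IsLocalization.AtPrime Sₚ q]
    (φ : R →+* S) (ψ : Rₚ →+* Sₚ) (h : ψ.comp (algebraMap R Rₚ) = (algebraMap S Sₚ).comp φ) :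
    q.comap φ ≤ p := by
  intro a ha
  by_contra hap
  have hunit : IsUnit (ψ (algebraMap R Rₚ a)) :=
    ((IsLocalization.AtPrime.isUnit_to_map_iff Rₚ p a).mpr hap).map ψ
  rw [← RingHom.comp_apply, h, RingHom.comp_apply] at hunit
  exact (IsLocalization.AtPrime.isUnit_to_map_iff Sₚ q (φ a)).mp hunit ha

theorem AlgebraicGeometry.StructureSheaf.comap_le_of_toStalk_comp_eq {A B : Type u}
    [CommRing A] [CommRing B] {p : PrimeSpectrum A} {q : PrimeSpectrum B}
    (φ : CommRingCat.of A ⟶ CommRingCat.of B)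
    (ψ : (Spec.structureSheaf A).presheaf.stalk p ⟶ (Spec.structureSheaf B).presheaf.stalk q)
    (h : StructureSheaf.toStalk A p ≫ ψ = φ ≫ StructureSheaf.toStalk B q) :
    q.asIdeal.comap φ.hom ≤ p.asIdeal :=
  Ideal.comap_le_of_comp_algebraMap_eq _ _ φ.hom ψ.hom (congrArg CommRingCat.Hom.hom h)

namespace AlgebraicGeometry.Spec

variable {A B : Type u} [CommRing A] [CommRing B]
  (f : Spec.sheafedSpaceObj (CommRingCat.of B) ⟶ Spec.sheafedSpaceObj (CommRingCat.of A))

noncomputable def globalSectionsMap : CommRingCat.of A ⟶ CommRingCat.of B :=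
  (StructureSheaf.globalSectionsIso (CommRingCat.of A)).hom ≫ f.hom.c.app (op ⊤) ≫
    (StructureSheaf.globalSectionsIso (CommRingCat.of B)).inv

theorem globalSectionsIso_hom_comp_c_app_top :
    (StructureSheaf.globalSectionsIso (CommRingCat.of A)).hom ≫ f.hom.c.app (op ⊤) =
      globalSectionsMap f ≫ (StructureSheaf.globalSectionsIso (CommRingCat.of B)).hom :=
  (Iso.comp_inv_eq _).mp (Category.assoc _ _ _)

theorem toStalk_comp_stalkMap (q : PrimeSpectrum B) :
    StructureSheaf.toStalk A (f.hom.base q) ≫ PresheafedSpace.Hom.stalkMap f.hom q =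
      globalSectionsMap f ≫ StructureSheaf.toStalk B q := by
  ext a
  exact (PresheafedSpace.stalkMap_germ_apply f.hom ⊤ q trivial _).trans
    (congrArg ((Spec.sheafedSpaceObj (CommRingCat.of B)).presheaf.germ
      ((Opens.map f.hom.base).obj ⊤) q trivial)
      (ConcreteCategory.congr_hom (globalSectionsIso_hom_comp_c_app_top f) a))

noncomputable def globalSectionsAlgHom {k : Type*} [CommSemiring k] [Algebra k A] [Algebra k B]
    (hk : ∀ c : k, f.hom.c.app (op ⊤)
        ((StructureSheaf.globalSectionsIso (CommRingCat.of A)).hom (algebraMap k A c)) =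
      (StructureSheaf.globalSectionsIso (CommRingCat.of B)).hom (algebraMap k B c)) :
    A →ₐ[k] B where
  __ := (globalSectionsMap f).hom
  commutes' c :=
    (StructureSheaf.globalSectionsIso (CommRingCat.of B)).commRingCatIsoToRingEquiv.injective
      ((ConcreteCategory.congr_hom (globalSectionsIso_hom_comp_c_app_top f) _).symm.trans (hk c))

theorem comap_globalSectionsMap_le (q : PrimeSpectrum B) :
    q.asIdeal.comap (globalSectionsMap f).hom ≤ (f.hom.base q).asIdeal :=
  StructureSheaf.comap_le_of_toStalk_comp_eq _ _ (toStalk_comp_stalkMap f q)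

theorem base_eq_comap_of_isMaximal {q : PrimeSpectrum B}
    (hq : (q.asIdeal.comap (globalSectionsMap f).hom).IsMaximal) :
    f.hom.base q = PrimeSpectrum.comap (globalSectionsMap f).hom q :=
  PrimeSpectrum.ext (hq.eq_of_le (f.hom.base q).2.ne_top (comap_globalSectionsMap_le f q)).symm

theorem base_eq_comap_of_isJacobsonRing [IsJacobsonRing B]
    (hmax : ∀ m : Ideal B, m.IsMaximal → (m.comap (globalSectionsMap f).hom).IsMaximal)
    (q : PrimeSpectrum B) : f.hom.base q = PrimeSpectrum.comap (globalSectionsMap f).hom q := by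
  refine PrimeSpectrum.ext (le_antisymm (fun a ha => ?_) (comap_globalSectionsMap_le f q))
  change globalSectionsMap f a ∈ q.asIdeal
  rw [← IsJacobsonRing.out' _ q.2.isRadical, Ideal.jacobson, Ideal.mem_sInf]
  rintro m ⟨hqm, hm⟩
  let M : PrimeSpectrum B := ⟨m, hm.isPrime⟩
  have hspec : f.hom.base q ⤳ f.hom.base M :=
    ((PrimeSpectrum.le_iff_specializes q M).mp hqm).map f.hom.base.hom.continuous
  have haM : a ∈ (f.hom.base M).asIdeal := (PrimeSpectrum.le_iff_specializes _ _).mpr hspec ha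
  rwa [base_eq_comap_of_isMaximal f (hmax m hm)] at haM

theorem stalkSpecializes_comp_stalkMap {q : PrimeSpectrum B}
    (h : f.hom.base q = PrimeSpectrum.comap (globalSectionsMap f).hom q) :
    (Spec.structureSheaf A).presheaf.stalkSpecializes (specializes_of_eq h) ≫
        PresheafedSpace.Hom.stalkMap f.hom q =
      PresheafedSpace.Hom.stalkMap (Spec.sheafedSpaceMap (globalSectionsMap f)).hom q := by
  have htoStalk : (StructureSheaf.toStalk A (PrimeSpectrum.comap (globalSectionsMap f).hom q) ≫
      (Spec.structureSheaf A).presheaf.stalkSpecializes (specializes_of_eq h)) ≫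
        PresheafedSpace.Hom.stalkMap f.hom q =
      StructureSheaf.toStalk A (PrimeSpectrum.comap (globalSectionsMap f).hom q) ≫
        PresheafedSpace.Hom.stalkMap (Spec.sheafedSpaceMap (globalSectionsMap f)).hom q :=
    (congrArg (· ≫ PresheafedSpace.Hom.stalkMap f.hom q)
      (StructureSheaf.toStalk_stalkSpecializes (specializes_of_eq h))).trans
      ((toStalk_comp_stalkMap f q).trans (stalkMap_toStalk (globalSectionsMap f) q).symm)
  exact CommRingCat.hom_ext (IsLocalization.ringHom_ext
    (PrimeSpectrum.comap (globalSectionsMap f).hom q).asIdeal.primeCompl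
    (congrArg CommRingCat.Hom.hom htoStalk))

theorem eq_sheafedSpaceMap_of_base_eq
    (h : ∀ q, f.hom.base q = PrimeSpectrum.comap (globalSectionsMap f).hom q) :
    f = Spec.sheafedSpaceMap (globalSectionsMap f) := by
  have hbase : f.hom.base = Spec.topMap (globalSectionsMap f) := TopCat.ext h
  refine InducedCategory.hom_ext
    (PresheafedSpace.ext _ _ hbase (NatTrans.ext (funext fun U => ?_)))
  obtain ⟨U⟩ := U
  refine CommRingCat.hom_ext (RingHom.ext fun s => ?_)
  refine TopCat.Presheaf.section_ext (Spec.structureSheaf B) _ _ _ fun q hq => ?_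
  rw [NatTrans.comp_app, Functor.whiskerRight_app, eqToHom_app, CommRingCat.comp_apply]
  erw [TopCat.Presheaf.germ_res_apply']
  have hfq : f.hom.base q ∈ U := h q ▸ hq
  erw [← PresheafedSpace.stalkMap_germ_apply f.hom U q hfq,
    ← PresheafedSpace.stalkMap_germ_apply (Spec.sheafedSpaceMap (globalSectionsMap f)).hom U q hq]
  have hgerm : (Spec.structureSheaf A).presheaf.germ U (f.hom.base q) hfq ≫
        PresheafedSpace.Hom.stalkMap f.hom q =
      (Spec.structureSheaf A).presheaf.germ U _ hq ≫
        PresheafedSpace.Hom.stalkMap (Spec.sheafedSpaceMap (globalSectionsMap f)).hom q := by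
    rw [← stalkSpecializes_comp_stalkMap f (h q)]
    exact (congrArg (· ≫ PresheafedSpace.Hom.stalkMap f.hom q)
      ((Spec.structureSheaf A).presheaf.germ_stalkSpecializes hq
        (specializes_of_eq (h q)))).symm.trans (Category.assoc _ _ _)
  exact ConcreteCategory.congr_hom hgerm s

end AlgebraicGeometry.Spec

theorem ringedSpaceMap_is_schemeMap_general {k : Type u} [Field k]
    (A B : Type u) [CommRing A] [CommRing B] [Algebra k A] [Algebra k B]
    [Algebra.FiniteType k B]
    (f : Spec.sheafedSpaceObj (CommRingCat.of B) ⟶ Spec.sheafedSpaceObj (CommRingCat.of A))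
    (hf : ∀ (U : Opens (PrimeSpectrum A)) (c : k),
      f.hom.c.app (op U) (StructureSheaf.toOpen A U (algebraMap k A c)) =
        StructureSheaf.toOpen B ((Opens.map f.hom.base).obj U) (algebraMap k B c)) :
    (∀ p, IsLocalHom (PresheafedSpace.Hom.stalkMap f.hom p).hom) ∧
      f = Spec.sheafedSpaceMap
        ((StructureSheaf.globalSectionsIso (CommRingCat.of A)).hom ≫ f.hom.c.app (op ⊤) ≫
          (StructureSheaf.globalSectionsIso (CommRingCat.of B)).inv) := by
  have : IsJacobsonRing B := isJacobsonRing_of_finiteType (A := k)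
  have hf_eq : f = Spec.sheafedSpaceMap (Spec.globalSectionsMap f) :=
    Spec.eq_sheafedSpaceMap_of_base_eq f (Spec.base_eq_comap_of_isJacobsonRing f fun m _ =>
      Ideal.IsMaximal.comap_algHom_of_finiteType (Spec.globalSectionsAlgHom f (hf ⊤)) m)
  refine ⟨fun p => ?_, hf_eq⟩
  rw [hf_eq]
  exact (Spec.locallyRingedSpaceMap _).prop p

/-- Over an algebraically closed field `k`, any morphism of ringed spaces
`Spec B ⟶ Spec A` between spectra of finitely generated commutative `k`-algebras whose
components on sections are `k`-algebra homomorphisms is a morphism of schemes: all stalk maps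
are local ring homomorphisms and the morphism is the one induced by the global sections map. -/
theorem ringedSpaceMap_is_schemeMap {k : Type u} [Field k] [IsAlgClosed k]
    (A B : Type u) [CommRing A] [CommRing B] [Algebra k A] [Algebra k B]
    [Algebra.FiniteType k A] [Algebra.FiniteType k B]
    (f : Spec.sheafedSpaceObj (CommRingCat.of B) ⟶ Spec.sheafedSpaceObj (CommRingCat.of A))
    (hf : ∀ (U : Opens (PrimeSpectrum A)) (c : k),
      f.hom.c.app (op U) (StructureSheaf.toOpen A U (algebraMap k A c)) =
        StructureSheaf.toOpen B ((Opens.map f.hom.base).obj U) (algebraMap k B c)) :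
    (∀ p, IsLocalHom (PresheafedSpace.Hom.stalkMap f.hom p).hom) ∧
      f = Spec.sheafedSpaceMap
        ((StructureSheaf.globalSectionsIso (CommRingCat.of A)).hom ≫ f.hom.c.app (op ⊤) ≫
          (StructureSheaf.globalSectionsIso (CommRingCat.of B)).inv) :=
  ringedSpaceMap_is_schemeMap_general A B f hf
end

section
/- Let X be a sober topological space (X is T0 and every nonempty irreducible closed subset of X has a generic point) which is Jacobson (every closed subset of X equals the closure of its set of closed points). Let X₀ ⊆ X be the subspace of closed points of X. Then the map T ↦ T ∩ X₀ is a bijection from the set of nonempty irreducible closed subsets of X onto the set of nonempty irreducible closed subsets of the subspace X₀, whose inverse sends a subset T′ ⊆ X₀ to its closure in X. Consequently the map x ↦ (closure of {x} in X) ∩ X₀ is a bijection from X onto the set of nonempty irreducible closed subsets of X₀, identifying X with the sobrification of X₀. -/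
open Set

/-- A subset of a subspace whose image is preirreducible is preirreducible. -/
lemma preirr_of_image {X : Type*} [TopologicalSpace X] {A : Set X} {S : Set A}
    (h : IsPreirreducible (Subtype.val '' S)) : IsPreirreducible S := by
  rintro _ _ ⟨u, hu, rfl⟩ ⟨v, hv, rfl⟩ ⟨⟨x, hxA⟩, hxS, hxu⟩ ⟨⟨y, hyA⟩, hyS, hyv⟩
  rcases h u v hu hv ⟨x, ⟨⟨x, hxA⟩, hxS, rfl⟩, hxu⟩ ⟨y, ⟨⟨y, hyA⟩, hyS, rfl⟩, hyv⟩ with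
    ⟨z, ⟨⟨z, hzA⟩, hzS, rfl⟩, hzu, hzv⟩
  exact ⟨⟨z, hzA⟩, hzS, hzu, hzv⟩

/-- Let `X` be a sober topological space which is Jacobson, and let `X₀` be its subspace of
closed points.  Then `T ↦ T ∩ X₀` is a bijection from the nonempty irreducible closed subsets
of `X` onto those of `X₀`, with inverse taking closures in `X`; consequently
`x ↦ (closure {x}) ∩ X₀` is a bijection from `X` onto the nonempty irreducible closed subsets
of `X₀`, identifying `X` with the sobrification of `X₀`. -/
theorem sober_jacobson_sobrification {X : Type*} [TopologicalSpace X] [T0Space X]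
    [QuasiSober X]
    (hJ : ∀ T : Set X, IsClosed T → T = closure (T ∩ {x : X | IsClosed ({x} : Set X)})) :
    -- `T ↦ T ∩ X₀` maps irreducible closed sets of `X` to irreducible closed sets of `X₀`
    (∀ T : Set X, IsClosed T → IsIrreducible T →
      IsClosed ((Subtype.val ⁻¹' T : Set {x : X // IsClosed ({x} : Set X)})) ∧
        IsIrreducible ((Subtype.val ⁻¹' T : Set {x : X // IsClosed ({x} : Set X)}))) ∧
    -- it is injective on irreducible closed sets
    (∀ T T' : Set X, IsClosed T → IsIrreducible T → IsClosed T' → IsIrreducible T' →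
      (Subtype.val ⁻¹' T : Set {x : X // IsClosed ({x} : Set X)}) = Subtype.val ⁻¹' T' →
        T = T') ∧
    -- its inverse is given by taking closures in `X`
    (∀ S : Set {x : X // IsClosed ({x} : Set X)}, IsClosed S → IsIrreducible S →
      IsClosed (closure (Subtype.val '' S)) ∧ IsIrreducible (closure (Subtype.val '' S)) ∧
        Subtype.val ⁻¹' (closure (Subtype.val '' S)) = S) ∧
    (∀ T : Set X, IsClosed T → IsIrreducible T →
      closure (Subtype.val '' (Subtype.val ⁻¹' T : Set {x : X // IsClosed ({x} : Set X)})) =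
        T) ∧
    -- consequently, `x ↦ closure {x} ∩ X₀` is a bijection from `X` onto the irreducible
    -- closed subsets of `X₀`
    (∀ x : X,
      IsClosed (Subtype.val ⁻¹' closure {x} : Set {x : X // IsClosed ({x} : Set X)}) ∧
        IsIrreducible
          (Subtype.val ⁻¹' closure {x} : Set {x : X // IsClosed ({x} : Set X)})) ∧
    (∀ x y : X,
      (Subtype.val ⁻¹' closure {x} : Set {x : X // IsClosed ({x} : Set X)}) =
        Subtype.val ⁻¹' closure {y} → x = y) ∧
    (∀ S : Set {x : X // IsClosed ({x} : Set X)}, IsClosed S → IsIrreducible S →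
      ∃ x : X, (Subtype.val ⁻¹' closure {x} : Set {x : X // IsClosed ({x} : Set X)}) = S) := by
  set X₀ : Set X := {x : X | IsClosed ({x} : Set X)} with hX₀
  -- image of preimage
  have himg : ∀ T : Set X, (Subtype.val '' (Subtype.val ⁻¹' T : Set X₀)) = T ∩ X₀ := by
    intro T
    rw [Subtype.image_preimage_coe, inter_comm]
  -- forward direction
  have fwd : ∀ T : Set X, IsClosed T → IsIrreducible T →
      IsClosed ((Subtype.val ⁻¹' T : Set X₀)) ∧ IsIrreducible ((Subtype.val ⁻¹' T : Set X₀)) := by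
    intro T hTc hTi
    have hC : IsClosed ((Subtype.val ⁻¹' T : Set X₀)) := hTc.preimage continuous_subtype_val
    have hIrr : IsIrreducible (T ∩ X₀) := by
      rw [isIrreducible_iff_closure.symm, ← hJ T hTc]; exact hTi
    have hne : ((Subtype.val ⁻¹' T : Set X₀)).Nonempty := by
      obtain ⟨x, hx1, hx2⟩ := hIrr.nonempty
      exact ⟨⟨x, hx2⟩, hx1⟩
    refine ⟨hC, hne, preirr_of_image ?_⟩
    rw [himg]; exact hIrr.isPreirreducible
  -- reconstruction
  have rec₁ : ∀ T : Set X, IsClosed T → IsIrreducible T →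
      closure (Subtype.val '' (Subtype.val ⁻¹' T : Set X₀)) = T := by
    intro T hTc _
    rw [himg]; exact (hJ T hTc).symm
  have inj : ∀ T T' : Set X, IsClosed T → IsIrreducible T → IsClosed T' → IsIrreducible T' →
      (Subtype.val ⁻¹' T : Set X₀) = Subtype.val ⁻¹' T' → T = T' := by
    intro T T' hTc hTi hT'c hT'i h
    rw [← rec₁ T hTc hTi, ← rec₁ T' hT'c hT'i, h]
  have bwd : ∀ S : Set X₀, IsClosed S → IsIrreducible S →
      IsClosed (closure (Subtype.val '' S)) ∧ IsIrreducible (closure (Subtype.val '' S)) ∧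
        Subtype.val ⁻¹' (closure (Subtype.val '' S)) = S := by
    intro S hSc hSi
    refine ⟨isClosed_closure, (hSi.image _ continuous_subtype_val.continuousOn).closure, ?_⟩
    obtain ⟨C, hCc, hC⟩ := isClosed_induced_iff.mp hSc
    refine Subset.antisymm ?_ (fun a ha => subset_closure ⟨a, ha, rfl⟩)
    intro a ha
    have h1 : Subtype.val '' S ⊆ C := by
      rw [← hC]; exact image_preimage_subset _ _
    have h2 : closure (Subtype.val '' S) ⊆ C := hCc.closure_subset_iff.mpr h1
    rw [← hC]
    exact h2 ha
  refine ⟨fwd, inj, bwd, rec₁, ?_, ?_, ?_⟩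
  · intro x
    exact fwd _ isClosed_closure isIrreducible_singleton.closure
  · intro x y h
    have := inj _ _ isClosed_closure isIrreducible_singleton.closure isClosed_closure
      isIrreducible_singleton.closure h
    exact (specializes_iff_closure_subset.mpr this.le).antisymm
      (specializes_iff_closure_subset.mpr this.ge) |>.eq.symm ▸ rfl
  · intro S hSc hSi
    obtain ⟨_, hirr, hpre⟩ := bwd S hSc hSi
    obtain ⟨x, hx⟩ := QuasiSober.sober hirr isClosed_closure
    refine ⟨x, ?_⟩
    rw [hx.def]
    exact hpre
end

section
/- Let k be an algebraically closed field, A a finitely generated commutative k-algebra, X = Spec A, and U ⊆ X an open subset. Let Λ be the set of maximal ideals of A contained in U, for m ∈ Λ let Â_m denote the m-adic completion of A, let P = ∏_{m ∈ Λ} Â_m, let a : A → P be the diagonal map induced by the canonical maps A → Â_m, and let j : O_X(U) → P be the map sending a section to the family of images of its germs in the completions. Then j is injective, and its image is exactly the set of x ∈ P such that there exists an ideal I ⊆ A with: (i) I ⊄ m for every m ∈ Λ, and (ii) a(f)·x ∈ a(A) for every f ∈ I. (That is, O_X(U) is isomorphic to the Gabriel-style localization A_{T(U)} inside the product of completed local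 rings at the closed points of U.) -/
open AlgebraicGeometry CategoryTheory Opposite TopologicalSpace

universe u

/-!
`j` factors through the germ map `O(U) → ∏_{m ∈ Λ} A_m`, followed by the maps `A_m → Â_m`, which
are injective by Krull's intersection theorem. The germ map is injective because `Spec A` is a
Jacobson space: every point of `U` specializes to a closed point of `U`, and the germ at a point
determines the germs at its generizations.

For `s ∈ O(U)`, the ideal `{f | f s ∈ A}` lies in no prime `p` of `U`: on a basic open
`p ∈ D(h) ⊆ U` we have `h^n s = b`, and as `U` is quasi-compact, a further power of `h` makes
`h^N s ∈ A` on all of `U`. Conversely, if `a(f) x = a(b_f)` for all `f ∈ I` and `I` lies in no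
maximal ideal of `U`, then the sets `D(f) ∩ U` cover `U`, the fractions `b_f / f` agree on
overlaps since `j (f b_g - g b_f) = 0`, and they glue to a section `s` with `j s = x`, because
`a(f)` is a unit in `Â_m` for `f ∉ m`.
-/

theorem JacobsonSpace.exists_specializes_mem_closedPoints {X : Type*} [TopologicalSpace X]
    [JacobsonSpace X] {U : Set X} (hU : IsOpen U) {x : X} (hx : x ∈ U) :
    ∃ y ∈ U ∩ closedPoints X, x ⤳ y := by
  obtain ⟨y, ⟨hyx, hyU⟩, hy⟩ := nonempty_inter_closedPoints (Z := closure {x} ∩ U)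
    ⟨x, subset_closure rfl, hx⟩ (isClosed_closure.isLocallyClosed.inter hU.isLocallyClosed)
  exact ⟨y, ⟨hyU, hy⟩, specializes_iff_mem_closure.mpr hyx⟩

theorem PrimeSpectrum.exists_le_isMaximal_mem {R : Type*} [CommRing R] [IsJacobsonRing R]
    {U : Set (PrimeSpectrum R)} (hU : IsOpen U) {x : PrimeSpectrum R} (hx : x ∈ U) :
    ∃ y ∈ U, y.asIdeal.IsMaximal ∧ x.asIdeal ≤ y.asIdeal := by
  obtain ⟨y, ⟨hyU, hy⟩, hxy⟩ := JacobsonSpace.exists_specializes_mem_closedPoints hU hx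
  exact ⟨y, hyU, (isClosed_singleton_iff_isMaximal y).mp hy, (le_iff_specializes x y).mpr hxy⟩

section Sheaf

universe v w

open Limits

variable {C : Type w} [Category.{v} C] [HasColimits.{v} C] {FC : C → C → Type*}
  {CC : C → Type v} [∀ X Y, FunLike (FC X Y) (CC X) (CC Y)] [ConcreteCategory.{v} C FC]
  [PreservesFilteredColimits (CategoryTheory.forget C)] [HasLimits C]
  [PreservesLimits (CategoryTheory.forget C)] [(CategoryTheory.forget C).ReflectsIsomorphisms]

theorem TopCat.Sheaf.eq_of_germ_eq_of_mem_closedPoints {X : TopCat.{v}} [JacobsonSpace X]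
    (F : TopCat.Sheaf C X) (U : Opens X) (s t : ToType (F.1.obj (op U)))
    (h : ∀ (x : X) (hx : x ∈ U), x ∈ closedPoints X →
      F.presheaf.germ U x hx s = F.presheaf.germ U x hx t) : s = t := by
  refine TopCat.Presheaf.section_ext F U s t fun x hx => ?_
  obtain ⟨y, ⟨hyU, hy⟩, hxy⟩ := JacobsonSpace.exists_specializes_mem_closedPoints U.isOpen hx
  rw [← F.presheaf.germ_stalkSpecializes_apply hyU hxy, h y hyU hy,
    F.presheaf.germ_stalkSpecializes_apply]

end Sheaf

section AdicCompletion

variable {R : Type*} [CommRing R] [IsNoetherianRing R]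

theorem AdicCompletion.exists_mem_mul_eq_self_of_algebraMap_eq_zero {I : Ideal R} {t : R}
    (ht : algebraMap R (AdicCompletion I R) t = 0) : ∃ r ∈ I, r * t = t := by
  have hmem : t ∈ (⨅ n : ℕ, I ^ n • ⊤ : Submodule R R) := by
    refine Submodule.mem_iInf _ |>.mpr fun n => ?_
    simpa [AdicCompletion.algebraMap_apply, AdicCompletion.of_apply,
      Ideal.Quotient.eq_zero_iff_mem] using congrArg (fun y => y.1 n) ht
  obtain ⟨⟨r, hr⟩, hrt⟩ := (I.mem_iInf_smul_pow_eq_bot_iff t).mp hmem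
  exact ⟨r, hr, hrt⟩

theorem Localization.AtPrime.algebraMap_eq_zero_of_adicCompletion {I p : Ideal R} [p.IsPrime]
    (hIp : I ≤ p) {t : R} (ht : algebraMap R (AdicCompletion I R) t = 0) :
    algebraMap R (Localization.AtPrime p) t = 0 := by
  obtain ⟨r, hr, hrt⟩ := AdicCompletion.exists_mem_mul_eq_self_of_algebraMap_eq_zero ht
  refine (IsLocalization.map_eq_zero_iff p.primeCompl _ t).mpr ⟨⟨1 - r, fun h => ?_⟩, ?_⟩
  · exact Ideal.IsPrime.one_notMem ‹_› (by simpa using p.add_mem h (hIp hr))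
  · simp [sub_mul, hrt]

theorem Localization.AtPrime.injective_of_comp_algebraMap_eq_adicCompletion {p : Ideal R}
    [p.IsPrime] (c : Localization.AtPrime p →+* AdicCompletion p R)
    (hc : c.comp (algebraMap R _) = algebraMap R _) : Function.Injective c :=
  IsLocalization.injective_of_map_algebraMap_zero (M := p.primeCompl) _ c fun t ht =>
    algebraMap_eq_zero_of_adicCompletion le_rfl (by rwa [← RingHom.comp_apply, hc] at ht)

end AdicCompletion

namespace AlgebraicGeometry

theorem Scheme.exists_res_mul_eq_res {X : Scheme.{u}} [IsAffine X] {U : X.Opens}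
    (hU : IsCompact (U : Set X)) (s : Γ(X, U)) {x : X} (hx : x ∈ U) :
    ∃ f b : Γ(X, ⊤), x ∈ X.basicOpen f ∧
      X.presheaf.map (homOfLE le_top).op f * s = X.presheaf.map (homOfLE le_top).op b := by
  obtain ⟨_, ⟨h, rfl⟩, hxh, hhU⟩ := (Opens.isBasis_iff_nbhd.mp (isBasis_basicOpen X)) hx
  set ρ := X.presheaf.map (homOfLE (le_top : U ≤ ⊤)).op
  have hres : ∀ c, X.presheaf.map (homOfLE hhU).op (ρ c) =
      algebraMap Γ(X, ⊤) Γ(X, X.basicOpen h) c :=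
    fun c => by rw [← ConcreteCategory.comp_apply, ← Functor.map_comp]; rfl
  obtain ⟨n, a, ha⟩ := IsLocalization.Away.surj h (X.presheaf.map (homOfLE hhU).op s)
  have hz : X.presheaf.map (homOfLE (X.basicOpen_le (ρ h))).op (ρ h ^ n * s - ρ a) = 0 := by
    have hle : X.basicOpen (ρ h) ≤ X.basicOpen h := by
      rw [Scheme.basicOpen_res]; exact inf_le_right
    rw [← homOfLE_comp hle hhU, op_comp, Functor.map_comp, ConcreteCategory.comp_apply,
      map_sub, map_mul, map_pow, hres, hres, mul_comm, ha, sub_self, map_zero]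
  obtain ⟨m, hm⟩ := exists_pow_mul_eq_zero_of_res_basicOpen_eq_zero_of_isCompact X hU _ _ hz
  -- the extra factor `h` keeps the exponent positive, as `basicOpen_pow` requires
  refine ⟨h ^ (m + 1 + n), h ^ (m + 1) * a, by rwa [X.basicOpen_pow h (by omega)], ?_⟩
  simp only [map_mul, map_pow]
  linear_combination (ρ h) * hm

theorem Scheme.exists_mul_eq_of_basicOpen {X : Scheme.{u}} {U : X.Opens} {ι : Type*}
    (f b : ι → Γ(X, U)) (hcompat : ∀ i j, f i * b j = f j * b i) (j : ι) :
    ∃ t : Γ(X, X.basicOpen (f j)), ∀ i,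
      X.presheaf.map (homOfLE (X.basicOpen_le (f j))).op (f i) * t =
        X.presheaf.map (homOfLE (X.basicOpen_le (f j))).op (b i) := by
  set F := X.presheaf.map (homOfLE (X.basicOpen_le (f j))).op
  have hunit : IsUnit (F (f j)) := RingedSpace.isUnit_res_basicOpen X.toRingedSpace (f j)
  refine ⟨↑hunit.unit⁻¹ * F (b j), fun i => hunit.mul_left_cancel ?_⟩
  have hcompat' : F (f i) * F (b j) = F (f j) * F (b i) := by
    rw [← map_mul, ← map_mul, hcompat]
  linear_combination (F (f i) * F (b j)) * hunit.mul_val_inv + hcompat'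

theorem Scheme.exists_mul_eq_of_le_iSup_basicOpen {X : Scheme.{u}} {U : X.Opens} {ι : Type*}
    (f b : ι → Γ(X, U)) (hcover : U ≤ ⨆ i, X.basicOpen (f i))
    (hcompat : ∀ i j, f i * b j = f j * b i) :
    ∃ s : Γ(X, U), ∀ i, f i * s = b i := by
  have res_res : ∀ {V₁ V₂ V₃ : X.Opens} (h₁ : V₂ ≤ V₁) (h₂ : V₃ ≤ V₂) (y : Γ(X, V₁)),
      X.presheaf.map (homOfLE h₂).op (X.presheaf.map (homOfLE h₁).op y) =
        X.presheaf.map (homOfLE (h₂.trans h₁)).op y := fun _ _ _ => by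
    rw [← ConcreteCategory.comp_apply, ← Functor.map_comp]; rfl
  let IsFrac (W : X.Opens) (hW : W ≤ U) (t : Γ(X, W)) : Prop :=
    ∀ i, X.presheaf.map (homOfLE hW).op (f i) * t = X.presheaf.map (homOfLE hW).op (b i)
  have isFrac_res : ∀ {W W'} (hW : W ≤ U) (h : W' ≤ W) {t}, IsFrac W hW t →
      IsFrac W' (h.trans hW) (X.presheaf.map (homOfLE h).op t) := by
    intro W W' hW h t ht i
    rw [← res_res hW h, ← res_res hW h, ← map_mul, ht i]
  have isFrac_unique : ∀ {W} (hW : W ≤ U) (j) (hj : W ≤ X.basicOpen (f j)) {t t'},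
      IsFrac W hW t → IsFrac W hW t' → t = t' := by
    intro W hW j hj t t' ht ht'
    have hu : IsUnit (X.presheaf.map (homOfLE hW).op (f j)) := by
      rw [← res_res (X.basicOpen_le (f j)) hj]
      exact (RingedSpace.isUnit_res_basicOpen X.toRingedSpace (f j)).map
        (X.presheaf.map (homOfLE hj).op).hom
    exact hu.mul_left_cancel ((ht j).trans (ht' j).symm)
  choose σ hσ using Scheme.exists_mul_eq_of_basicOpen f b hcompat
  obtain ⟨s, hs, -⟩ : ∃! s : Γ(X, U),
      ∀ j, X.presheaf.map (homOfLE (X.basicOpen_le (f j))).op s = σ j :=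
    X.sheaf.existsUnique_gluing' (fun i => X.basicOpen (f i)) U
      (fun i => homOfLE (X.basicOpen_le (f i))) hcover σ fun i j =>
        isFrac_unique _ i inf_le_left (isFrac_res _ _ (hσ i)) (isFrac_res _ _ (hσ j))
  refine ⟨s, fun i => X.sheaf.eq_of_locally_eq' (fun j => X.basicOpen (f j)) U
    (fun j => homOfLE (X.basicOpen_le (f j))) hcover _ _ fun j => ?_⟩
  change X.presheaf.map _ (f i * s) = X.presheaf.map _ (b i)
  rw [map_mul, hs j]
  exact hσ j i

namespace Spec

variable {R : CommRingCat.{u}}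

/-- Stated through the stalk of `Spec.structureSheaf R`, so that the map `j` of the theorem is
`c ∘ germToLocalization` by definition. -/
noncomputable def germToLocalization (U : (Spec R).Opens) (x : PrimeSpectrum R)
    (hx : x ∈ U) : Γ(Spec R, U) →+* Localization.AtPrime x.asIdeal :=
  (IsLocalization.algEquiv x.asIdeal.primeCompl ((Spec.structureSheaf R).presheaf.stalk x)
    (Localization.AtPrime x.asIdeal)).toRingHom.comp ((Spec R).presheaf.germ U x hx).hom

theorem germToLocalization_algebraMap (U : (Spec R).Opens) (x : PrimeSpectrum R) (hx : x ∈ U)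
    (r : R) : germToLocalization U x hx (algebraMap R Γ(Spec R, U) r) = algebraMap R _ r := by
  have hgerm : (Spec R).presheaf.germ U x hx (algebraMap R Γ(Spec R, U) r) =
      algebraMap R ((Spec.structureSheaf R).presheaf.stalk x) r :=
    StructureSheaf.algebraMap_germ_apply U x hx r
  exact (congrArg (IsLocalization.algEquiv x.asIdeal.primeCompl
    ((Spec.structureSheaf R).presheaf.stalk x) (Localization.AtPrime x.asIdeal)) hgerm).trans
    (AlgEquiv.commutes _ r)

theorem eq_of_germToLocalization_eq [IsJacobsonRing R] {U : (Spec R).Opens}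
    {s t : Γ(Spec R, U)}
    (h : ∀ (x : PrimeSpectrum R) (hx : x ∈ U), x.asIdeal.IsMaximal →
      germToLocalization U x hx s = germToLocalization U x hx t) : s = t := by
  have : JacobsonSpace (Spec R) := inferInstanceAs (JacobsonSpace (PrimeSpectrum R))
  refine TopCat.Sheaf.eq_of_germ_eq_of_mem_closedPoints (Spec R).sheaf U s t
    fun (x : PrimeSpectrum R) hx hxc => ?_
  exact (IsLocalization.algEquiv x.asIdeal.primeCompl ((Spec.structureSheaf R).presheaf.stalk x)
    (Localization.AtPrime x.asIdeal)).injective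
    (h x hx ((PrimeSpectrum.isClosed_singleton_iff_isMaximal x).mp hxc))

theorem basicOpen_algebraMap (U : (Spec R).Opens) (h : R) :
    (Spec R).basicOpen (algebraMap R Γ(Spec R, U) h) = U ⊓ PrimeSpectrum.basicOpen h := by
  rw [IsAffineOpen.algebraMap_Spec_obj, CommRingCat.hom_comp, RingHom.comp_apply,
    Scheme.basicOpen_res, basicOpen_eq_of_affine]

theorem colon_singleton_not_le {U : (Spec R).Opens} (hU : IsCompact (U : Set (Spec R)))
    (s : Γ(Spec R, U)) {x : PrimeSpectrum R} (hx : x ∈ U) :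
    ¬ (1 : Submodule R Γ(Spec R, U)).colon {s} ≤ x.asIdeal := by
  obtain ⟨f, b, hxf, hfb⟩ := Scheme.exists_res_mul_eq_res hU s hx
  rw [basicOpen_eq_of_affine'] at hxf
  refine fun hle => hxf (hle (Submodule.mem_colon_singleton.mpr ?_))
  refine Submodule.mem_one.mpr ⟨(Scheme.ΓSpecIso R).hom b, ?_⟩
  simp [Algebra.smul_def, IsAffineOpen.algebraMap_Spec_obj, hfb]

theorem le_iSup_basicOpen_algebraMap [IsJacobsonRing R] {U : (Spec R).Opens} {I : Ideal R}
    (hI : ∀ x : PrimeSpectrum R, x ∈ U → x.asIdeal.IsMaximal → ¬ I ≤ x.asIdeal) :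
    U ≤ ⨆ f : I, (Spec R).basicOpen (algebraMap R Γ(Spec R, U) f) := by
  intro x hx
  obtain ⟨y, hyU, hy, hxy⟩ := PrimeSpectrum.exists_le_isMaximal_mem U.2 hx
  obtain ⟨f, hfI, hfy⟩ := SetLike.not_le_iff_exists.mp (hI y hyU hy)
  refine Opens.mem_iSup.mpr ⟨⟨f, hfI⟩, ?_⟩
  rw [basicOpen_algebraMap]
  exact ⟨hx, fun hfx => hfy (hxy hfx)⟩

variable (U : (Spec R).Opens) in
abbrev MaximalPointsIn : Type u := {x : PrimeSpectrum R // x.asIdeal.IsMaximal ∧ x ∈ U}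

variable {U : (Spec R).Opens}
  {c : ∀ p : MaximalPointsIn U,
    Localization.AtPrime p.1.asIdeal →+* AdicCompletion p.1.asIdeal R}

variable (U c) in
noncomputable def toAdicCompletions :
    Γ(Spec R, U) →+* ∀ p : MaximalPointsIn U, AdicCompletion p.1.asIdeal R :=
  RingHom.pi fun p => (c p).comp (germToLocalization U p.1 p.2.2)

variable (hc : ∀ p, (c p).comp (algebraMap R (Localization.AtPrime p.1.asIdeal)) =
  algebraMap R (AdicCompletion p.1.asIdeal R))
include hc

theorem toAdicCompletions_algebraMap (r : R) :
    toAdicCompletions U c (algebraMap R Γ(Spec R, U) r) =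
      algebraMap R (∀ p : MaximalPointsIn U, AdicCompletion p.1.asIdeal R) r := by
  funext p
  simp only [toAdicCompletions, RingHom.pi_apply, RingHom.comp_apply,
    germToLocalization_algebraMap, ← hc p, Pi.algebraMap_apply]

theorem toAdicCompletions_injective [IsNoetherianRing R] [IsJacobsonRing R] :
    Function.Injective (toAdicCompletions U c) := by
  intro s t hst
  refine eq_of_germToLocalization_eq fun x hx hmax => ?_
  have := hmax.isPrime
  exact Localization.AtPrime.injective_of_comp_algebraMap_eq_adicCompletion _ (hc ⟨x, hmax, hx⟩)
    (congrFun hst ⟨x, hmax, hx⟩)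

theorem range_toAdicCompletions [IsNoetherianRing R] [IsJacobsonRing R] :
    Set.range (toAdicCompletions U c) = {x | ∃ I : Ideal R,
      (∀ p : MaximalPointsIn U, ¬ I ≤ p.1.asIdeal) ∧ ∀ f ∈ I, algebraMap R _ f * x ∈
        Set.range (algebraMap R (∀ p : MaximalPointsIn U, AdicCompletion p.1.asIdeal R))} := by
  have hJ := toAdicCompletions_algebraMap hc
  ext x
  constructor
  · rintro ⟨s, rfl⟩
    refine ⟨(1 : Submodule R Γ(Spec R, U)).colon {s},
      fun p => colon_singleton_not_le (NoetherianSpace.isCompact _) s p.2.2, fun f hf => ?_⟩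
    obtain ⟨b, hb⟩ := Submodule.mem_one.mp (Submodule.mem_colon_singleton.mp hf)
    exact ⟨b, by rw [← hJ, hb, Algebra.smul_def, map_mul, hJ]⟩
  · rintro ⟨I, hI, hIx⟩
    choose b hb using fun f : I => hIx f f.2
    obtain ⟨s, hs⟩ := Scheme.exists_mul_eq_of_le_iSup_basicOpen
      (fun f : I => algebraMap R Γ(Spec R, U) f) (fun f => algebraMap R _ (b f))
      (le_iSup_basicOpen_algebraMap fun x hx hmax => hI ⟨x, hmax, hx⟩) fun f g => by
        apply toAdicCompletions_injective hc
        simp only [map_mul, hJ, hb]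
        ring
    refine ⟨s, funext fun p => ?_⟩
    obtain ⟨f, hfI, hfp⟩ := SetLike.not_le_iff_exists.mp (hI p)
    have hunit : IsUnit (algebraMap R (AdicCompletion p.1.asIdeal R) f) := by
      rw [← hc p]
      exact (IsLocalization.map_units _ (⟨f, hfp⟩ : p.1.asIdeal.primeCompl)).map (c p)
    refine hunit.mul_left_cancel ?_
    have := congrFun (congrArg (toAdicCompletions U c) (hs ⟨f, hfI⟩)) p
    rw [map_mul, hJ, hJ] at this
    exact this.trans (congrFun (hb ⟨f, hfI⟩) p)

end Spec

end AlgebraicGeometry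

theorem sections_iso_gabriel_localization_general {k : Type u} [Field k]
    (A : Type u) [CommRing A] [Algebra k A] [Algebra.FiniteType k A]
    (U : Opens (PrimeSpectrum A))
    (c : ∀ p : {p : PrimeSpectrum A // p.asIdeal.IsMaximal ∧ p ∈ U},
      Localization.AtPrime p.1.asIdeal →+* AdicCompletion p.1.asIdeal A)
    (hc : ∀ p, (c p).comp (algebraMap A (Localization.AtPrime p.1.asIdeal)) =
      algebraMap A (AdicCompletion p.1.asIdeal A)) :
    letI Λ := {p : PrimeSpectrum A // p.asIdeal.IsMaximal ∧ p ∈ U}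
    letI P := ∀ p : Λ, AdicCompletion p.1.asIdeal A
    letI a : A →+* P := Pi.ringHom fun p => algebraMap A (AdicCompletion p.1.asIdeal A)
    letI j : (Spec.structureSheaf A).1.obj (op U) → P :=
      fun s p => c p (IsLocalization.algEquiv p.1.asIdeal.primeCompl
        ((Spec.structureSheaf A).presheaf.stalk p.1) (Localization.AtPrime p.1.asIdeal)
        (((Spec.structureSheaf A).presheaf.germ U p.1 p.2.2).hom s))
    Function.Injective j ∧
      Set.range j = {x : P | ∃ I : Ideal A, (∀ p : Λ, ¬ I ≤ p.1.asIdeal) ∧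
        ∀ f ∈ I, a f * x ∈ Set.range a} := by
  have : IsNoetherianRing A := Algebra.FiniteType.isNoetherianRing k A
  have : IsJacobsonRing A := isJacobsonRing_of_finiteType (A := k)
  exact ⟨Spec.toAdicCompletions_injective (R := .of A) hc,
    Spec.range_toAdicCompletions (R := .of A) hc⟩

/-- Let `k` be an algebraically closed field, `A` a finitely generated commutative
`k`-algebra, `X = Spec A` and `U ⊆ X` open.  Let `Λ` be the set of maximal ideals of `A`
lying in `U`, let `P = ∏_{m ∈ Λ} Â_m` be the product of the `m`-adic completions, `a : A → P`
the diagonal map, and let `j : O_X(U) → P` send a section to the family of the images of its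
germs in the completions (via any ring homomorphisms `c_m : A_m → Â_m` compatible with the
canonical maps from `A`, which are unique when they exist).  Then `j` is injective and its
image is exactly `{x ∈ P | ∃ ideal I ⊆ A, (∀ m ∈ Λ, I ⊄ m) ∧ a(I)·x ⊆ a(A)}`. -/
theorem sections_iso_gabriel_localization {k : Type u} [Field k] [IsAlgClosed k]
    (A : Type u) [CommRing A] [Algebra k A] [Algebra.FiniteType k A]
    (U : Opens (PrimeSpectrum A))
    (c : ∀ p : {p : PrimeSpectrum A // p.asIdeal.IsMaximal ∧ p ∈ U},
      Localization.AtPrime p.1.asIdeal →+* AdicCompletion p.1.asIdeal A)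
    (hc : ∀ p, (c p).comp (algebraMap A (Localization.AtPrime p.1.asIdeal)) =
      algebraMap A (AdicCompletion p.1.asIdeal A)) :
    letI Λ := {p : PrimeSpectrum A // p.asIdeal.IsMaximal ∧ p ∈ U}
    letI P := ∀ p : Λ, AdicCompletion p.1.asIdeal A
    letI a : A →+* P := Pi.ringHom fun p => algebraMap A (AdicCompletion p.1.asIdeal A)
    letI j : (Spec.structureSheaf A).1.obj (op U) → P :=
      fun s p => c p (IsLocalization.algEquiv p.1.asIdeal.primeCompl
        ((Spec.structureSheaf A).presheaf.stalk p.1) (Localization.AtPrime p.1.asIdeal)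
        (((Spec.structureSheaf A).presheaf.germ U p.1 p.2.2).hom s))
    Function.Injective j ∧
      Set.range j = {x : P | ∃ I : Ideal A, (∀ p : Λ, ¬ I ≤ p.1.asIdeal) ∧
        ∀ f ∈ I, a f * x ∈ Set.range a} :=
  sections_iso_gabriel_localization_general (k := k) A U c hc
end
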